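/- Assume f₀ : 𝒳ⁿ → ℝⁿ is Lipschitz on bounded sets with f₀(0) = 0. Suppose there exist a continuously differentiable V : ℝⁿ → [0,∞) and α₁, α₂ of class 𝒦∞ with α₁(|z|) ≤ V(z) ≤ α₂(|z|) for all z ∈ ℝⁿ, and suppose there exist α of class 𝒫 and ρ of class 𝒦∞ such that for all φ ∈ 𝒳ⁿ: if V(φ(0)) ≥ ρ(max_{τ∈[-Δ,0]} V(φ(τ))), then ∇V(φ(0)) · f₀(φ) ≤ −α(|φ(0)|). If ρ(s) < s for all s > 0, then the system ẋ(t) = f₀(x_t) is GAS. -/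

import Mathlib

open Set Filter MeasureTheory Topology
open scoped NNReal

noncomputable section

/-- `ℝⁿ` with the Euclidean norm. -/
abbrev Vec (n : ℕ) : Type := EuclideanSpace ℝ (Fin n)

/-- The state space `𝒳ⁿ = C([-Δ,0], ℝⁿ)`, equipped with the sup norm. -/
abbrev Hist (Δ : ℝ≥0) (n : ℕ) : Type :=
  ContinuousMap (Icc (-(Δ : ℝ)) (0 : ℝ)) (Vec n)

theorem zero_mem_IccD (Δ : ℝ≥0) : (0 : ℝ) ∈ Icc (-(Δ : ℝ)) (0 : ℝ) :=
  ⟨neg_nonpos.mpr Δ.coe_nonneg, le_refl 0⟩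

/-- `φ(0)`: the current value of a history segment. -/
def ev0 {Δ : ℝ≥0} {n : ℕ} (φ : Hist Δ n) : Vec n :=
  φ ⟨0, zero_mem_IccD Δ⟩

/-! ### Comparison functions -/

/-- Class `𝒦`: continuous, strictly increasing, zero at zero (on `[0,∞)`). -/
def ClassK (α : ℝ → ℝ) : Prop :=
  ContinuousOn α (Ici 0) ∧ StrictMonoOn α (Ici 0) ∧ α 0 = 0

/-- Class `𝒦∞`: class `𝒦` and unbounded. -/
def ClassKinf (α : ℝ → ℝ) : Prop :=
  ClassK α ∧ Tendsto α atTop atTop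

/-- Class `𝒩`: continuous, nondecreasing, zero at zero (on `[0,∞)`). -/
def ClassN (α : ℝ → ℝ) : Prop :=
  ContinuousOn α (Ici 0) ∧ MonotoneOn α (Ici 0) ∧ α 0 = 0

/-- Class `𝒫`: continuous, zero at zero, positive on `(0,∞)`. -/
def ClassP (α : ℝ → ℝ) : Prop :=
  ContinuousOn α (Ici 0) ∧ α 0 = 0 ∧ ∀ s : ℝ, 0 < s → 0 < α s

/-- Class `𝒦ℒ`. -/
def ClassKL (β : ℝ → ℝ → ℝ) : Prop :=
  (∀ t : ℝ, 0 ≤ t → ClassK fun s => β s t) ∧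
    ∀ s : ℝ, 0 ≤ s →
      ContinuousOn (β s) (Ici 0) ∧ AntitoneOn (β s) (Ici 0) ∧
        Tendsto (β s) atTop (𝓝 0)

/-! ### Inputs -/

/-- Admissible input: Lebesgue measurable and locally essentially bounded. -/
def IsInput {m : ℕ} (u : ℝ → Vec m) : Prop :=
  Measurable u ∧ ∀ T : ℝ, 0 < T → ∃ C : ℝ, ∀ᵐ t ∂volume, t ∈ Icc (0 : ℝ) T → ‖u t‖ ≤ C

/-- Essential supremum of `‖u‖` over a set of times. -/
def essBnd {m : ℕ} (u : ℝ → Vec m) (s : Set ℝ) : ℝ :=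
  sInf {C : ℝ | 0 ≤ C ∧ ∀ᵐ τ ∂volume, τ ∈ s → ‖u τ‖ ≤ C}

/-! ### History segments along a trajectory -/

-- The history segment `x_t ∈ 𝒳ⁿ` of a trajectory `x : ℝ → ℝⁿ` (with junk value `0`
-- when `x` is not continuous on `[t-Δ, t]`).
open Classical in
def seg (Δ : ℝ≥0) {n : ℕ} (x : ℝ → Vec n) (t : ℝ) : Hist Δ n :=
  if hx : ContinuousOn x (Icc (t - (Δ : ℝ)) t) then
    { toFun := fun τ => x (t + τ.1)
      continuous_toFun := by
        have h1 : Continuous fun τ : Icc (-(Δ : ℝ)) (0 : ℝ) => t + τ.1 :=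
          continuous_const.add continuous_subtype_val
        have h2 : ∀ τ : Icc (-(Δ : ℝ)) (0 : ℝ), t + τ.1 ∈ Icc (t - (Δ : ℝ)) t := by
          rintro ⟨τ, hτ⟩
          rw [mem_Icc] at hτ ⊢
          constructor
          · linarith [hτ.1]
          · linarith [hτ.2]
        exact hx.comp_continuous h1 h2 }
  else 0

/-! ### Driver's derivative and Dini derivative -/

/-- The deformed history `φ_{h,w}` appearing in Driver's derivative: for `0 ≤ h < Δ`,
`φ_{h,w}(s) = φ(s+h)` for `s ∈ [-Δ,-h)` and `φ_{h,w}(s) = φ(0) + w(h+s)` for `s ∈ [-h,0]`. -/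
def shiftSeg {Δ : ℝ≥0} {n : ℕ} (φ : Hist Δ n) (w : Vec n) (h : ℝ) : Hist Δ n :=
  { toFun := fun s =>
      φ (projIcc (-(Δ : ℝ)) 0 (neg_nonpos.mpr Δ.coe_nonneg) (s.1 + h)) + max (h + s.1) 0 • w
    continuous_toFun := by
      refine Continuous.add ?_ ?_
      · exact φ.continuous.comp (continuous_projIcc.comp
          (continuous_subtype_val.add continuous_const))
      · exact ((continuous_const.add continuous_subtype_val).max continuous_const).smul
          continuous_const }

/-- Driver's derivative `D⁺V(φ,w)`, valued in the extended reals. -/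
def driverD {Δ : ℝ≥0} {n : ℕ} (V : Hist Δ n → ℝ) (φ : Hist Δ n) (w : Vec n) : EReal :=
  limsup (fun h : ℝ => (((V (shiftSeg φ w h) - V φ) / h : ℝ) : EReal)) (𝓝[>] (0 : ℝ))

/-- Upper right-hand Dini derivative of `ν : ℝ → ℝ`, valued in the extended reals. -/
def diniD (ν : ℝ → ℝ) (t : ℝ) : EReal :=
  limsup (fun h : ℝ => (((ν (t + h) - ν t) / h : ℝ) : EReal)) (𝓝[>] (0 : ℝ))

/-! ### Lipschitz conditions -/

/-- `f : 𝒳ⁿ × ℝᵐ → ℝⁿ` is Lipschitz on bounded sets. -/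
def LipOnBounded {Δ : ℝ≥0} {n m : ℕ} (f : Hist Δ n → Vec m → Vec n) : Prop :=
  ∀ r : ℝ, 0 < r → ∃ L : ℝ, 0 < L ∧
    ∀ (φ₁ φ₂ : Hist Δ n) (v₁ v₂ : Vec m),
      ‖φ₁‖ ≤ r → ‖φ₂‖ ≤ r → ‖v₁‖ ≤ r → ‖v₂‖ ≤ r →
        ‖f φ₁ v₁ - f φ₂ v₂‖ ≤ L * (‖φ₁ - φ₂‖ + ‖v₁ - v₂‖)

/-- An input-free vector field `f₀ : 𝒳ⁿ → ℝⁿ` Lipschitz on bounded sets. -/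
def LipOnBounded₀ {Δ : ℝ≥0} {n : ℕ} (f₀ : Hist Δ n → Vec n) : Prop :=
  ∀ r : ℝ, 0 < r → ∃ L : ℝ, 0 < L ∧
    ∀ φ₁ φ₂ : Hist Δ n, ‖φ₁‖ ≤ r → ‖φ₂‖ ≤ r → ‖f₀ φ₁ - f₀ φ₂‖ ≤ L * ‖φ₁ - φ₂‖

/-- A functional `V : 𝒳ⁿ → ℝ` Lipschitz on bounded sets. -/
def LipOnBoundedV {Δ : ℝ≥0} {n : ℕ} (V : Hist Δ n → ℝ) : Prop :=
  ∀ r : ℝ, 0 < r → ∃ L : ℝ, 0 < L ∧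
    ∀ φ₁ φ₂ : Hist Δ n, ‖φ₁‖ ≤ r → ‖φ₂‖ ≤ r → |V φ₁ - V φ₂| ≤ L * ‖φ₁ - φ₂‖

/-- A functional `V : 𝒳ⁿ → ℝ` locally Lipschitz. -/
def LocallyLipV {Δ : ℝ≥0} {n : ℕ} (V : Hist Δ n → ℝ) : Prop :=
  ∀ φ : Hist Δ n, ∃ δ : ℝ, 0 < δ ∧ ∃ L : ℝ, 0 < L ∧
    ∀ φ₁ φ₂ : Hist Δ n, ‖φ₁ - φ‖ ≤ δ → ‖φ₂ - φ‖ ≤ δ → |V φ₁ - V φ₂| ≤ L * ‖φ₁ - φ₂‖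

/-! ### Solutions -/

/-- `x` is a solution of `ẋ(t) = f(x_t, u(t))` with initial state `x₀` on `[0, tmax)`. -/
structure IsSolution (Δ : ℝ≥0) {n m : ℕ} (f : Hist Δ n → Vec m → Vec n)
    (u : ℝ → Vec m) (x₀ : Hist Δ n) (tmax : EReal) (x : ℝ → Vec n) : Prop where
  tmax_pos : 0 < tmax
  cont : ContinuousOn x {s : ℝ | -(Δ : ℝ) ≤ s ∧ (s : EReal) < tmax}
  init : ∀ τ : Icc (-(Δ : ℝ)) (0 : ℝ), x τ.1 = x₀ τ
  integrable : ∀ t : ℝ, 0 ≤ t → (t : EReal) < tmax →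
    IntervalIntegrable (fun s => f (seg Δ x s) (u s)) volume 0 t
  integral_eq : ∀ t : ℝ, 0 ≤ t → (t : EReal) < tmax →
    x t = x 0 + ∫ s in (0:ℝ)..t, f (seg Δ x s) (u s)

/-- Maximal solution: a solution admitting no proper extension. -/
def IsMaxSolution (Δ : ℝ≥0) {n m : ℕ} (f : Hist Δ n → Vec m → Vec n)
    (u : ℝ → Vec m) (x₀ : Hist Δ n) (tmax : EReal) (x : ℝ → Vec n) : Prop :=
  IsSolution Δ f u x₀ tmax x ∧
    ∀ (tmax' : EReal) (x' : ℝ → Vec n), IsSolution Δ f u x₀ tmax' x' →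
      (∀ t : ℝ, -(Δ : ℝ) ≤ t → (t : EReal) < tmax → x' t = x t) → tmax' ≤ tmax

/-- Solution of the input-free system `ẋ(t) = f₀(x_t)`. -/
def IsSolution₀ (Δ : ℝ≥0) {n : ℕ} (f₀ : Hist Δ n → Vec n) (x₀ : Hist Δ n)
    (tmax : EReal) (x : ℝ → Vec n) : Prop :=
  IsSolution Δ (fun φ (_ : Vec 0) => f₀ φ) (fun _ => 0) x₀ tmax x

/-- Maximal solution of the input-free system `ẋ(t) = f₀(x_t)`. -/
def IsMaxSolution₀ (Δ : ℝ≥0) {n : ℕ} (f₀ : Hist Δ n → Vec n) (x₀ : Hist Δ n)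
    (tmax : EReal) (x : ℝ → Vec n) : Prop :=
  IsMaxSolution Δ (fun φ (_ : Vec 0) => f₀ φ) (fun _ => 0) x₀ tmax x

/-! ### Stability properties (input-free systems) -/

/-- Global asymptotic stability (GAS). -/
def GAS (Δ : ℝ≥0) {n : ℕ} (f₀ : Hist Δ n → Vec n) : Prop :=
  ∃ β : ℝ → ℝ → ℝ, ClassKL β ∧
    ∀ (x₀ : Hist Δ n) (tmax : EReal) (x : ℝ → Vec n),
      IsMaxSolution₀ Δ f₀ x₀ tmax x →
        tmax = ⊤ ∧ ∀ t : ℝ, 0 ≤ t → ‖x t‖ ≤ β ‖x₀‖ t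

/-- Global exponential stability (GES). -/
def GES (Δ : ℝ≥0) {n : ℕ} (f₀ : Hist Δ n → Vec n) : Prop :=
  ∃ k : ℝ, 1 ≤ k ∧ ∃ lam : ℝ, 0 < lam ∧
    ∀ (x₀ : Hist Δ n) (tmax : EReal) (x : ℝ → Vec n),
      IsMaxSolution₀ Δ f₀ x₀ tmax x →
        tmax = ⊤ ∧ ∀ t : ℝ, 0 ≤ t → ‖x t‖ ≤ k * ‖x₀‖ * Real.exp (-lam * t)

/-- (Local) asymptotic stability (AS) of the origin. -/
def AS (Δ : ℝ≥0) {n : ℕ} (f₀ : Hist Δ n → Vec n) : Prop :=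
  ∃ r : ℝ, 0 < r ∧ ∃ β : ℝ → ℝ → ℝ, ClassKL β ∧
    ∀ (x₀ : Hist Δ n) (tmax : EReal) (x : ℝ → Vec n),
      IsMaxSolution₀ Δ f₀ x₀ tmax x → ‖x₀‖ ≤ r →
        tmax = ⊤ ∧ ∀ t : ℝ, 0 ≤ t → ‖x t‖ ≤ β ‖x₀‖ t

/-- (Local) exponential stability (ES) of the origin. -/
def ES (Δ : ℝ≥0) {n : ℕ} (f₀ : Hist Δ n → Vec n) : Prop :=
  ∃ r : ℝ, 0 < r ∧ ∃ k : ℝ, 1 ≤ k ∧ ∃ lam : ℝ, 0 < lam ∧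
    ∀ (x₀ : Hist Δ n) (tmax : EReal) (x : ℝ → Vec n),
      IsMaxSolution₀ Δ f₀ x₀ tmax x → ‖x₀‖ ≤ r →
        tmax = ⊤ ∧ ∀ t : ℝ, 0 ≤ t → ‖x t‖ ≤ k * ‖x₀‖ * Real.exp (-lam * t)

/-! ### Forward completeness -/

/-- Robust forward completeness (RFC) of `ẋ(t) = f(x_t,u(t))`. -/
def RFC (Δ : ℝ≥0) {n m : ℕ} (f : Hist Δ n → Vec m → Vec n) : Prop :=
  (∀ (x₀ : Hist Δ n) (u : ℝ → Vec m) (tmax : EReal) (x : ℝ → Vec n),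
      IsInput u → IsMaxSolution Δ f u x₀ tmax x → tmax = ⊤) ∧
    ∀ T : ℝ, 0 < T → ∀ r : ℝ, 0 < r → ∃ C : ℝ,
      ∀ (x₀ : Hist Δ n) (u : ℝ → Vec m) (tmax : EReal) (x : ℝ → Vec n),
        IsInput u → IsMaxSolution Δ f u x₀ tmax x →
          ‖x₀‖ ≤ r → essBnd u (Ici 0) ≤ r →
            ∀ t : ℝ, t ∈ Icc (0 : ℝ) T → ‖seg Δ x t‖ ≤ C

/-- Robust forward completeness of the input-free system `ẋ(t) = f₀(x_t)`. -/
def RFC₀ (Δ : ℝ≥0) {n : ℕ} (f₀ : Hist Δ n → Vec n) : Prop :=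
  RFC Δ (fun φ (_ : Vec 0) => f₀ φ)

/-! ### Input-to-state stability notions -/

/-- Input-to-state stability (ISS). -/
def ISS (Δ : ℝ≥0) {n m : ℕ} (f : Hist Δ n → Vec m → Vec n) : Prop :=
  ∃ β : ℝ → ℝ → ℝ, ∃ μ : ℝ → ℝ, ClassKL β ∧ ClassN μ ∧
    ∀ (x₀ : Hist Δ n) (u : ℝ → Vec m) (tmax : EReal) (x : ℝ → Vec n),
      IsInput u → IsMaxSolution Δ f u x₀ tmax x →
        tmax = ⊤ ∧ ∀ t : ℝ, 0 ≤ t → ‖x t‖ ≤ β ‖x₀‖ t + μ (essBnd u (Icc 0 t))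

/-- Local input-to-state stability (LISS). -/
def LISS (Δ : ℝ≥0) {n m : ℕ} (f : Hist Δ n → Vec m → Vec n) : Prop :=
  ∃ r : ℝ, 0 < r ∧ ∃ β : ℝ → ℝ → ℝ, ∃ μ : ℝ → ℝ, ClassKL β ∧ ClassN μ ∧
    ∀ (x₀ : Hist Δ n) (u : ℝ → Vec m) (tmax : EReal) (x : ℝ → Vec n),
      IsInput u → IsMaxSolution Δ f u x₀ tmax x →
        ‖x₀‖ ≤ r → essBnd u (Ici 0) ≤ r →
          tmax = ⊤ ∧ ∀ t : ℝ, 0 ≤ t → ‖x t‖ ≤ β ‖x₀‖ t + μ (essBnd u (Icc 0 t))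

/-- Integral input-to-state stability (iISS). -/
def iISS (Δ : ℝ≥0) {n m : ℕ} (f : Hist Δ n → Vec m → Vec n) : Prop :=
  ∃ β : ℝ → ℝ → ℝ, ∃ η μ : ℝ → ℝ, ClassKL β ∧ ClassN η ∧ ClassN μ ∧
    ∀ (x₀ : Hist Δ n) (u : ℝ → Vec m) (tmax : EReal) (x : ℝ → Vec n),
      IsInput u → IsMaxSolution Δ f u x₀ tmax x →
        tmax = ⊤ ∧ ∀ t : ℝ, 0 ≤ t →
          ‖x t‖ ≤ β ‖x₀‖ t + η (∫ s in (0:ℝ)..t, μ ‖u s‖)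

/-- The UBEBS estimate with offset `c`. -/
def UBEBSwith (Δ : ℝ≥0) {n m : ℕ} (f : Hist Δ n → Vec m → Vec n) (c : ℝ) : Prop :=
  ∃ α ξ ζ : ℝ → ℝ, ClassKinf α ∧ ClassKinf ξ ∧ ClassKinf ζ ∧
    ∀ (x₀ : Hist Δ n) (u : ℝ → Vec m) (tmax : EReal) (x : ℝ → Vec n),
      IsInput u → IsMaxSolution Δ f u x₀ tmax x →
        tmax = ⊤ ∧ ∀ t : ℝ, 0 ≤ t →
          α ‖x t‖ ≤ ξ ‖x₀‖ + (∫ s in (0:ℝ)..t, ζ ‖u s‖) + c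

/-! ### Lyapunov–Krasovskii functionals -/

/-- Lyapunov–Krasovskii functional candidate (LKF). -/
def IsLKF {Δ : ℝ≥0} {n : ℕ} (V : Hist Δ n → ℝ) : Prop :=
  (∀ φ, 0 ≤ V φ) ∧ LipOnBoundedV V ∧
    ∃ α₁ α₂ : ℝ → ℝ, ClassKinf α₁ ∧ ClassKinf α₂ ∧
      ∀ φ : Hist Δ n, α₁ ‖ev0 φ‖ ≤ V φ ∧ V φ ≤ α₂ ‖φ‖

/-- Coercive Lyapunov–Krasovskii functional candidate. -/
def IsCoerciveLKF {Δ : ℝ≥0} {n : ℕ} (V : Hist Δ n → ℝ) : Prop :=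
  (∀ φ, 0 ≤ V φ) ∧ LipOnBoundedV V ∧
    ∃ α₁ α₂ : ℝ → ℝ, ClassKinf α₁ ∧ ClassKinf α₂ ∧
      ∀ φ : Hist Δ n, α₁ ‖φ‖ ≤ V φ ∧ V φ ≤ α₂ ‖φ‖

end


/-! ### Auxiliary development -/

noncomputable section

variable {Δ : ℝ≥0} {n : ℕ}

theorem seg_apply {x : ℝ → Vec n} {t : ℝ} (hx : ContinuousOn x (Icc (t - (Δ : ℝ)) t))
    (τ : Icc (-(Δ : ℝ)) (0 : ℝ)) : seg Δ x t τ = x (t + τ.1) := by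
  rw [seg, dif_pos hx]; rfl

theorem mem_seg_dom {t : ℝ} (τ : Icc (-(Δ : ℝ)) (0 : ℝ)) :
    t + τ.1 ∈ Icc (t - (Δ : ℝ)) t := by
  obtain ⟨τ, h1, h2⟩ := τ
  exact ⟨by simp only []; linarith, by simp only []; linarith⟩

theorem seg_congr {x x' : ℝ → Vec n} {t : ℝ}
    (hx : ContinuousOn x (Icc (t - (Δ : ℝ)) t))
    (hx' : ContinuousOn x' (Icc (t - (Δ : ℝ)) t))
    (h : ∀ u ∈ Icc (t - (Δ : ℝ)) t, x u = x' u) :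
    seg Δ x t = seg Δ x' t := by
  ext τ
  rw [seg_apply hx, seg_apply hx']
  rw [h _ (mem_seg_dom τ)]

theorem seg_norm_le {x : ℝ → Vec n} {t : ℝ} {C : ℝ} (hC : 0 ≤ C)
    (h : ∀ u ∈ Icc (t - (Δ : ℝ)) t, ‖x u‖ ≤ C) : ‖seg Δ x t‖ ≤ C := by
  by_cases hx : ContinuousOn x (Icc (t - (Δ : ℝ)) t)
  · refine (ContinuousMap.norm_le _ hC).2 fun τ => ?_
    rw [seg_apply hx]
    exact h _ (mem_seg_dom τ)
  · rw [seg, dif_neg hx]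
    simpa using hC

theorem seg_zero (t : ℝ) : seg Δ (fun _ : ℝ => (0 : Vec n)) t = 0 := by
  ext τ
  rw [seg_apply continuousOn_const]
  rfl

/-- continuity of `s ↦ seg Δ x s` for globally continuous `x`. -/
theorem continuous_seg {x : ℝ → Vec n} (hx : Continuous x) :
    Continuous fun s : ℝ => seg Δ x s := by
  rw [continuous_iff_continuousAt]
  intro s₀
  rw [Metric.continuousAt_iff]
  intro ε hε
  have hK : IsCompact (Icc (s₀ - (Δ : ℝ) - 1) (s₀ + 1)) := isCompact_Icc
  have huc := hK.uniformContinuousOn_of_continuous hx.continuousOn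
  rw [Metric.uniformContinuousOn_iff] at huc
  obtain ⟨δ, hδ, hδ'⟩ := huc (ε / 2) (half_pos hε)
  refine ⟨min δ 1, lt_min hδ one_pos, fun {s} hs => ?_⟩
  rw [Real.dist_eq] at hs
  have hs1 : |s - s₀| < δ := lt_of_lt_of_le hs (min_le_left _ _)
  have hs2 : |s - s₀| < 1 := lt_of_lt_of_le hs (min_le_right _ _)
  have hle : dist (seg Δ x s) (seg Δ x s₀) ≤ ε / 2 := by
    rw [ContinuousMap.dist_le (le_of_lt (half_pos hε))]
    intro τ
    rw [seg_apply hx.continuousOn, seg_apply hx.continuousOn]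
    have hmem : ∀ u : ℝ, |u - s₀| ≤ 1 → ∀ τ' : Icc (-(Δ : ℝ)) (0:ℝ),
        u + τ'.1 ∈ Icc (s₀ - (Δ : ℝ) - 1) (s₀ + 1) := by
      intro u hu τ'
      obtain ⟨τ', h1, h2⟩ := τ'
      rw [abs_le] at hu
      constructor <;> simp only [] <;> nlinarith [hu.1, hu.2]
    refine le_of_lt (hδ' _ (hmem s hs2.le τ) _ (hmem s₀ (by simp) τ) ?_)
    have : dist (s + τ.1) (s₀ + τ.1) = |s - s₀| := by
      rw [Real.dist_eq]; ring_nf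
    rw [this]; exact hs1
  exact lt_of_le_of_lt hle (half_lt_self hε)

/-- clamp of a solution-like function -/
theorem continuous_clamp {x : ℝ → Vec n} {a b : ℝ} (hab : a ≤ b)
    (hx : ContinuousOn x (Icc a b)) :
    Continuous fun u : ℝ => x (max a (min u b)) := by
  refine hx.comp_continuous (continuous_const.max (continuous_id.min continuous_const))
    fun u => ⟨le_max_left _ _, max_le hab (min_le_right _ _)⟩

end

noncomputable section

/-- extension of a class-K∞ function to all of ℝ -/
def extK (a : ℝ → ℝ) : ℝ → ℝ := fun r => if r ≤ 0 then r else a r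

theorem extK_strictMono {a : ℝ → ℝ} (ha : ClassKinf a) : StrictMono (extK a) := by
  obtain ⟨⟨hc, hm, h0⟩, _⟩ := ha
  intro r₁ r₂ h
  by_cases h1 : r₁ ≤ 0 <;> by_cases h2 : r₂ ≤ 0 <;> simp only [extK, h1, h2, if_true, if_false]
  · exact h
  · push_neg at h2
    calc r₁ ≤ 0 := h1
    _ = a 0 := h0.symm
    _ < a r₂ := hm self_mem_Ici h2.le h2
  · exact absurd (h.le.trans h2) h1
  · push_neg at h1
    exact hm h1.le (h1.trans h).le h

theorem extK_continuous {a : ℝ → ℝ} (ha : ClassKinf a) : Continuous (extK a) := by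
  obtain ⟨⟨hc, hm, h0⟩, _⟩ := ha
  have hcc : Continuous fun r : ℝ => a (max r 0) :=
    hc.comp_continuous (continuous_id.max continuous_const) fun r => mem_Ici.2 (le_max_right _ _)
  have : extK a = fun r => if r ≤ 0 then r else a (max r 0) := by
    funext r
    by_cases h : r ≤ 0 <;> simp only [extK, h, if_true, if_false]
    push_neg at h
    rw [max_eq_left h.le]
  rw [this]
  refine Continuous.if_le continuous_id hcc continuous_id continuous_const fun r hr => ?_
  subst hr
  simpa using h0.symm

theorem extK_surjective {a : ℝ → ℝ} (ha : ClassKinf a) : Function.Surjective (extK a) := by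
  apply Continuous.surjective (extK_continuous ha)
  · refine Tendsto.congr' ?_ ha.2
    filter_upwards [eventually_gt_atTop 0] with r hr
    simp [extK, not_le.2 hr]
  · refine Tendsto.congr' ?_ tendsto_id
    filter_upwards [eventually_le_atBot 0] with r hr
    simp [extK, hr]

/-- the order isomorphism given by a class-K∞ function extended to ℝ -/
def kIso {a : ℝ → ℝ} (ha : ClassKinf a) : ℝ ≃o ℝ :=
  StrictMono.orderIsoOfSurjective (extK a) (extK_strictMono ha) (extK_surjective ha)

theorem kIso_apply {a : ℝ → ℝ} (ha : ClassKinf a) {r : ℝ} (hr : 0 ≤ r) :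
    kIso ha r = a r := by
  show extK a r = a r
  rcases eq_or_lt_of_le hr with h | h
  · simp [extK, ← h, ha.1.2.2]
  · simp [extK, not_le.2 h]

/-- the inverse of a class-K∞ function -/
def kInv {a : ℝ → ℝ} (ha : ClassKinf a) : ℝ → ℝ := fun r => (kIso ha).symm r

theorem kInv_continuous {a : ℝ → ℝ} (ha : ClassKinf a) : Continuous (kInv ha) :=
  (kIso ha).symm.continuous

theorem kInv_strictMono {a : ℝ → ℝ} (ha : ClassKinf a) : StrictMono (kInv ha) :=
  (kIso ha).symm.strictMono

theorem kInv_zero {a : ℝ → ℝ} (ha : ClassKinf a) : kInv ha 0 = 0 := by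
  show (kIso ha).symm 0 = 0
  rw [OrderIso.symm_apply_eq, kIso_apply ha le_rfl, ha.1.2.2]

theorem kInv_apply_self {a : ℝ → ℝ} (ha : ClassKinf a) {r : ℝ} (hr : 0 ≤ r) :
    kInv ha (a r) = r := by
  show (kIso ha).symm (a r) = r
  rw [← kIso_apply ha hr, OrderIso.symm_apply_apply]

theorem le_kInv {a : ℝ → ℝ} (ha : ClassKinf a) {r c : ℝ} (hr : 0 ≤ r) (h : a r ≤ c) :
    r ≤ kInv ha c := by
  have := (kInv_strictMono ha).monotone h
  rwa [kInv_apply_self ha hr] at this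

/-- monotone on Ici 0, from class K -/
theorem ClassK.monoOn {a : ℝ → ℝ} (ha : ClassK a) : MonotoneOn a (Ici 0) :=
  ha.2.1.monotoneOn

theorem ClassK.nonneg {a : ℝ → ℝ} (ha : ClassK a) {r : ℝ} (hr : 0 ≤ r) : 0 ≤ a r := by
  rw [← ha.2.2]
  exact ha.monoOn self_mem_Ici hr hr

end

noncomputable section

variable {Δ : ℝ≥0} {n : ℕ} {f₀ : Hist Δ n → Vec n}

theorem f0_continuous (hf : LipOnBounded₀ f₀) : Continuous f₀ := by
  rw [continuous_iff_continuousAt]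
  intro φ
  obtain ⟨L, hL, hLip⟩ := hf (‖φ‖ + 1) (by positivity)
  rw [Metric.continuousAt_iff]
  intro ε hε
  refine ⟨min 1 (ε / (2 * L)), lt_min one_pos (by positivity), fun {φ'} h => ?_⟩
  have h1 : dist φ' φ < 1 := lt_of_lt_of_le h (min_le_left _ _)
  have h2 : dist φ' φ < ε / (2 * L) := lt_of_lt_of_le h (min_le_right _ _)
  have hd : dist φ' φ = ‖φ' - φ‖ := dist_eq_norm _ _
  have hdn : (0:ℝ) ≤ dist φ' φ := dist_nonneg
  have hφ' : ‖φ'‖ ≤ ‖φ‖ + 1 := by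
    have h3 := norm_sub_norm_le φ' φ
    rw [← hd] at h3
    linarith
  have hb := hLip φ' φ hφ' (by linarith [norm_nonneg φ])
  rw [← hd] at hb
  rw [dist_eq_norm]
  have hL2 : L * dist φ' φ < L * (ε / (2 * L)) := by
    exact mul_lt_mul_of_pos_left h2 hL
  have hE : L * (ε / (2 * L)) = ε / 2 := by field_simp
  calc ‖f₀ φ' - f₀ φ‖ ≤ L * dist φ' φ := hb
  _ < ε := by rw [hE] at hL2; linarith

theorem f0_norm_le (hf : LipOnBounded₀ f₀) (hf0 : f₀ 0 = 0) {r L : ℝ} (hr : 0 < r)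
    (hL : 0 < L)
    (hLip : ∀ φ₁ φ₂ : Hist Δ n, ‖φ₁‖ ≤ r → ‖φ₂‖ ≤ r → ‖f₀ φ₁ - f₀ φ₂‖ ≤ L * ‖φ₁ - φ₂‖)
    {φ : Hist Δ n} (hφ : ‖φ‖ ≤ r) : ‖f₀ φ‖ ≤ L * ‖φ‖ := by
  have := hLip φ 0 hφ (by simp [hr.le])
  simpa [hf0] using this

section Sol

variable {x₀ : Hist Δ n} {tmax : EReal} {x : ℝ → Vec n}

theorem coe_lt_of_le {K u : ℝ} (hu : u ≤ K) (hK : (K : EReal) < tmax) :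
    (u : EReal) < tmax := lt_of_le_of_lt (by exact_mod_cast hu) hK

theorem sol_contOn (hs : IsSolution₀ Δ f₀ x₀ tmax x) {K : ℝ} (hK : (K : EReal) < tmax) :
    ContinuousOn x (Icc (-(Δ : ℝ)) K) := by
  refine hs.cont.mono fun u hu => ⟨hu.1, coe_lt_of_le hu.2 hK⟩

/-- the clamped trajectory -/
def xcl (Δ : ℝ≥0) (x : ℝ → Vec n) (K : ℝ) : ℝ → Vec n :=
  fun u => x (max (-(Δ : ℝ)) (min u K))

theorem xcl_continuous (hs : IsSolution₀ Δ f₀ x₀ tmax x) {K : ℝ}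
    (hK0 : -(Δ : ℝ) ≤ K) (hK : (K : EReal) < tmax) : Continuous (xcl Δ x K) :=
  continuous_clamp hK0 (sol_contOn hs hK)

theorem xcl_eq {K : ℝ} (hK0 : -(Δ : ℝ) ≤ K) {u : ℝ} (hu : u ∈ Icc (-(Δ : ℝ)) K) :
    xcl Δ x K u = x u := by
  rw [xcl, min_eq_left hu.2, max_eq_right hu.1]

theorem seg_eq_seg_xcl (hs : IsSolution₀ Δ f₀ x₀ tmax x) {K s : ℝ}
    (hs0 : 0 ≤ s) (hsK : s ≤ K) (hK : (K : EReal) < tmax) :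
    seg Δ x s = seg Δ (xcl Δ x K) s := by
  have hK0 : -(Δ : ℝ) ≤ K := le_trans (neg_nonpos.2 Δ.coe_nonneg) (le_trans hs0 hsK)
  have hsub : Icc (s - (Δ : ℝ)) s ⊆ Icc (-(Δ : ℝ)) K := fun u hu =>
    ⟨by linarith [hu.1, Δ.coe_nonneg], le_trans hu.2 hsK⟩
  refine seg_congr ((sol_contOn hs hK).mono hsub)
    ((xcl_continuous hs hK0 hK).continuousOn) fun u hu => (xcl_eq hK0 (hsub hu)).symm
  
theorem integrand_contOn (hf : LipOnBounded₀ f₀) (hs : IsSolution₀ Δ f₀ x₀ tmax x)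
    {K : ℝ} (hK0 : 0 ≤ K) (hK : (K : EReal) < tmax) :
    ContinuousOn (fun s => f₀ (seg Δ x s)) (Icc 0 K) := by
  have hK0' : -(Δ : ℝ) ≤ K := le_trans (neg_nonpos.2 Δ.coe_nonneg) hK0
  have hc : Continuous fun s => f₀ (seg Δ (xcl Δ x K) s) :=
    (f0_continuous hf).comp (continuous_seg (xcl_continuous hs hK0' hK))
  refine hc.continuousOn.congr fun s hsm => ?_
  rw [seg_eq_seg_xcl hs hsm.1 hsm.2 hK]

theorem sol_hasDerivAt (hf : LipOnBounded₀ f₀) (hs : IsSolution₀ Δ f₀ x₀ tmax x)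
    {t : ℝ} (ht0 : 0 < t) (ht : (t : EReal) < tmax) :
    HasDerivAt x (f₀ (seg Δ x t)) t := by
  -- pick K between t and tmax
  obtain ⟨K, htK, hK⟩ : ∃ K : ℝ, t < K ∧ (K : EReal) < tmax := by
    obtain ⟨K, h1, h2⟩ := EReal.lt_iff_exists_real_btwn.1 ht
    exact ⟨K, by exact_mod_cast h1, h2⟩
  have hco := integrand_contOn hf hs (by linarith) hK
  have hnhds : Icc (0 : ℝ) K ∈ 𝓝 t := Icc_mem_nhds ht0 htK
  have hca : ContinuousAt (fun s => f₀ (seg Δ x s)) t := hco.continuousAt hnhds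
  have hint : IntervalIntegrable (fun s => f₀ (seg Δ x s)) volume 0 t := by
    have := hs.integrable t ht0.le ht
    exact this
  have hmeas : StronglyMeasurableAtFilter (fun s => f₀ (seg Δ x s)) (𝓝 t) volume :=
    ⟨Icc (0 : ℝ) K, hnhds, hco.aestronglyMeasurable measurableSet_Icc⟩
  have hF : HasDerivAt (fun u => ∫ s in (0:ℝ)..u, f₀ (seg Δ x s)) (f₀ (seg Δ x t)) t :=
    intervalIntegral.integral_hasDerivAt_right hint hmeas hca
  have hF' : HasDerivAt (fun u => x 0 + ∫ s in (0:ℝ)..u, f₀ (seg Δ x s))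
      (f₀ (seg Δ x t)) t := by simpa using hF.const_add (x 0)
  refine hF'.congr_of_eventuallyEq ?_
  filter_upwards [Ioo_mem_nhds ht0 htK] with u hu
  exact hs.integral_eq u hu.1.le (coe_lt_of_le hu.2.le hK)

end Sol

end

noncomputable section

variable {Δ : ℝ≥0} {n : ℕ} {f₀ : Hist Δ n → Vec n} {V : Vec n → ℝ}
  {α₁ α₂ α ρ : ℝ → ℝ} {x₀ : Hist Δ n} {tmax : EReal} {x : ℝ → Vec n}

/-- The Razumikhin condition applied along a trajectory. -/
theorem razumikhin_deriv
    (hVnonneg : ∀ z : Vec n, 0 ≤ V z)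
    (hρK : ClassKinf ρ)
    (hRaz : ∀ φ : Hist Δ n,
      ρ (⨆ τ : Icc (-(Δ : ℝ)) (0 : ℝ), V (φ τ)) ≤ V (ev0 φ) →
        fderiv ℝ V (ev0 φ) (f₀ φ) ≤ -α ‖ev0 φ‖)
    {t a : ℝ} (hcont : ContinuousOn x (Icc (t - (Δ : ℝ)) t))
    (hwin : ∀ u ∈ Icc (t - (Δ : ℝ)) t, V (x u) ≤ a)
    (hρa : ρ a ≤ V (x t)) :
    fderiv ℝ V (x t) (f₀ (seg Δ x t)) ≤ -α ‖x t‖ := by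
  set φ := seg Δ x t with hφ
  have hev : ev0 φ = x t := by
    rw [hφ, ev0, seg_apply hcont]
    norm_num
  have ht_mem : t ∈ Icc (t - (Δ : ℝ)) t := ⟨by linarith [Δ.coe_nonneg], le_rfl⟩
  have ha0 : 0 ≤ a := le_trans (hVnonneg (x t)) (hwin t ht_mem)
  haveI : Nonempty (Icc (-(Δ : ℝ)) (0 : ℝ)) := ⟨⟨0, zero_mem_IccD Δ⟩⟩
  have hbdd : ∀ τ : Icc (-(Δ : ℝ)) (0 : ℝ), V (φ τ) ≤ a := by
    intro τ
    rw [hφ, seg_apply hcont]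
    exact hwin _ (mem_seg_dom τ)
  have hsup_le : (⨆ τ : Icc (-(Δ : ℝ)) (0 : ℝ), V (φ τ)) ≤ a := ciSup_le hbdd
  have hsup_ge : V (x t) ≤ ⨆ τ : Icc (-(Δ : ℝ)) (0 : ℝ), V (φ τ) := by
    have := le_ciSup (f := fun τ : Icc (-(Δ : ℝ)) (0 : ℝ) => V (φ τ))
      ⟨a, by rintro y ⟨τ, rfl⟩; exact hbdd τ⟩ ⟨0, zero_mem_IccD Δ⟩
    rwa [show φ ⟨0, zero_mem_IccD Δ⟩ = x t from by rw [hφ, seg_apply hcont]; norm_num] at this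
  have hsup0 : 0 ≤ ⨆ τ : Icc (-(Δ : ℝ)) (0 : ℝ), V (φ τ) :=
    le_trans (hVnonneg (x t)) hsup_ge
  have hprem : ρ (⨆ τ : Icc (-(Δ : ℝ)) (0 : ℝ), V (φ τ)) ≤ V (ev0 φ) := by
    rw [hev]
    exact le_trans (hρK.1.monoOn hsup0 ha0 hsup_le) hρa
  have := hRaz φ hprem
  rwa [hev] at this

/-- Derivative of `V ∘ x` along a solution. -/
theorem Vx_hasDerivAt (hf : LipOnBounded₀ f₀) (hs : IsSolution₀ Δ f₀ x₀ tmax x)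
    (hV : ContDiff ℝ 1 V) {t : ℝ} (ht0 : 0 < t) (ht : (t : EReal) < tmax) :
    HasDerivAt (fun u => V (x u)) (fderiv ℝ V (x t) (f₀ (seg Δ x t))) t := by
  have hd := sol_hasDerivAt hf hs ht0 ht
  have hfd : HasFDerivAt V (fderiv ℝ V (x t)) (x t) :=
    ((hV.differentiable one_ne_zero) (x t)).hasFDerivAt
  exact hfd.comp_hasDerivAt t hd

/-- No upward crossing: the core Razumikhin barrier lemma. -/
theorem noup
    (hf : LipOnBounded₀ f₀) (hs : IsSolution₀ Δ f₀ x₀ tmax x)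
    (hV : ContDiff ℝ 1 V) (hVnonneg : ∀ z : Vec n, 0 ≤ V z)
    (hα₂ : ClassKinf α₂) (hsand : ∀ z : Vec n, α₁ ‖z‖ ≤ V z ∧ V z ≤ α₂ ‖z‖)
    (hα : ClassP α) (hρK : ClassKinf ρ)
    (hRaz : ∀ φ : Hist Δ n,
      ρ (⨆ τ : Icc (-(Δ : ℝ)) (0 : ℝ), V (φ τ)) ≤ V (ev0 φ) →
        fderiv ℝ V (ev0 φ) (f₀ φ) ≤ -α ‖ev0 φ‖)
    {t₁ a c : ℝ} (ht₁ : 0 ≤ t₁) (ht₁m : (t₁ : EReal) < tmax)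
    (hca : c ≤ a) (hc : 0 < c) (hρa : ρ a < c)
    (H : ∀ u ∈ Icc (t₁ - (Δ : ℝ)) t₁, V (x u) ≤ a)
    (Hc : V (x t₁) < c) :
    ∀ t : ℝ, t₁ ≤ t → (t : EReal) < tmax → V (x t) < c := by
  intro tE htE1 htEm
  by_contra hcon
  push_neg at hcon
  have ht₁tE : t₁ < tE := by
    rcases eq_or_lt_of_le htE1 with h | h
    · exact absurd (h ▸ hcon) (not_le.2 Hc)
    · exact h
  -- the first crossing time
  have hVxc : ContinuousOn (fun u => V (x u)) (Icc (-(Δ : ℝ)) tE) :=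
    hV.continuous.comp_continuousOn (sol_contOn hs htEm)
  have hIccsub : Icc t₁ tE ⊆ Icc (-(Δ : ℝ)) tE := fun u hu =>
    ⟨le_trans (neg_nonpos.2 Δ.coe_nonneg) (le_trans ht₁ hu.1), hu.2⟩
  set S := {u | u ∈ Icc t₁ tE ∧ c ≤ V (x u)} with hS
  have hSclosed : IsClosed S := by
    have : S = Icc t₁ tE ∩ (fun u => V (x u)) ⁻¹' Ici c := rfl
    rw [this]
    exact (hVxc.mono hIccsub).preimage_isClosed_of_isClosed isClosed_Icc isClosed_Ici
  have hSne : S.Nonempty := ⟨tE, ⟨htE1, le_rfl⟩, hcon⟩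
  have hSbdd : BddBelow S := ⟨t₁, fun u hu => hu.1.1⟩
  set tc := sInf S with htc
  have htcS : tc ∈ S := hSclosed.csInf_mem hSne hSbdd
  have htc1 : t₁ ≤ tc := htcS.1.1
  have htctE : tc ≤ tE := htcS.1.2
  have htcm : (tc : EReal) < tmax := coe_lt_of_le htctE htEm
  have hlt : ∀ u, t₁ ≤ u → u < tc → V (x u) < c := by
    intro u hu1 hu2
    by_contra h
    push_neg at h
    exact absurd (csInf_le hSbdd ⟨⟨hu1, le_trans hu2.le htctE⟩, h⟩) (not_le.2 hu2)
  have htc1' : t₁ < tc := by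
    rcases eq_or_lt_of_le htc1 with h | h
    · exact absurd (h ▸ htcS.2) (not_le.2 Hc)
    · exact h
  have htc0 : 0 < tc := lt_of_le_of_lt ht₁ htc1'
  have hderiv := Vx_hasDerivAt hf hs hV htc0 htcm
  -- V (x tc) = c
  have hVtc : V (x tc) = c := by
    refine le_antisymm ?_ htcS.2
    have htend : Tendsto (fun u => V (x u)) (𝓝[<] tc) (𝓝 (V (x tc))) :=
      (hderiv.continuousAt).continuousWithinAt.tendsto
    refine le_of_tendsto htend ?_
    filter_upwards [Ioo_mem_nhdsLT_of_mem (⟨htc1', le_rfl⟩ : tc ∈ Ioc t₁ tc)] with u hu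
    exact (hlt u hu.1.le hu.2).le
  -- window bound at tc
  have hwin : ∀ u ∈ Icc (tc - (Δ : ℝ)) tc, V (x u) ≤ a := by
    intro u hu
    rcases le_or_gt u t₁ with h | h
    · exact H u ⟨by linarith [hu.1, htc1'], h⟩
    · rcases lt_or_eq_of_le hu.2 with h2 | h2
      · exact le_trans (hlt u h.le h2).le hca
      · rw [h2, hVtc]; exact hca
  have hcontw : ContinuousOn x (Icc (tc - (Δ : ℝ)) tc) := by
    refine (sol_contOn hs htcm).mono fun u hu => ⟨?_, hu.2⟩
    have : -(Δ : ℝ) ≤ tc - (Δ : ℝ) := by linarith [lt_of_le_of_lt ht₁ htc1']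
    linarith [hu.1]
  have hraz := razumikhin_deriv hVnonneg hρK hRaz hcontw hwin (by rw [hVtc]; exact hρa.le)
  -- positivity of α at x tc
  have hxne : 0 < ‖x tc‖ := by
    rcases eq_or_lt_of_le (norm_nonneg (x tc)) with h | h
    · exfalso
      have := (hsand (x tc)).2
      rw [← h] at this
      rw [hα₂.1.2.2] at this
      rw [hVtc] at this
      linarith
    · exact h
  have hαpos : 0 < α ‖x tc‖ := hα.2.2 _ hxne
  -- the derivative is nonnegative from the left
  have hslope : Tendsto (slope (fun u => V (x u)) tc) (𝓝[≠] tc)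
      (𝓝 (fderiv ℝ V (x tc) (f₀ (seg Δ x tc)))) :=
    hasDerivAt_iff_tendsto_slope.1 hderiv
  have hslope' : Tendsto (slope (fun u => V (x u)) tc) (𝓝[<] tc)
      (𝓝 (fderiv ℝ V (x tc) (f₀ (seg Δ x tc)))) :=
    hslope.mono_left (nhdsWithin_mono tc fun u hu => ne_of_lt hu)
  have hge : 0 ≤ fderiv ℝ V (x tc) (f₀ (seg Δ x tc)) := by
    refine ge_of_tendsto hslope' ?_
    filter_upwards [Ioo_mem_nhdsLT_of_mem (⟨htc1', le_rfl⟩ : tc ∈ Ioc t₁ tc)] with u hu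
    rw [slope_def_field]
    have h1 : V (x u) - V (x tc) ≤ 0 := by
      rw [hVtc]
      linarith [hlt u hu.1.le hu.2]
    have h2 : u - tc < 0 := by linarith [hu.2]
    have := div_nonneg (neg_nonneg.2 h1) (neg_nonneg.2 h2.le)
    rwa [neg_div_neg_eq] at this
  linarith [hraz]

end

noncomputable section

variable {Δ : ℝ≥0} {n : ℕ} {f₀ : Hist Δ n → Vec n} {V : Vec n → ℝ}
  {α₁ α₂ α ρ : ℝ → ℝ} {x₀ : Hist Δ n} {tmax : EReal} {x : ℝ → Vec n}

theorem sol_init_apply (hs : IsSolution₀ Δ f₀ x₀ tmax x) {u : ℝ}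
    (hu : u ∈ Icc (-(Δ : ℝ)) (0 : ℝ)) : x u = x₀ ⟨u, hu⟩ := hs.init ⟨u, hu⟩

theorem sol_init_V_bound (hs : IsSolution₀ Δ f₀ x₀ tmax x)
    (hα₂ : ClassKinf α₂) (hsand : ∀ z : Vec n, α₁ ‖z‖ ≤ V z ∧ V z ≤ α₂ ‖z‖)
    {u : ℝ} (hu : u ∈ Icc (-(Δ : ℝ)) (0 : ℝ)) : V (x u) ≤ α₂ ‖x₀‖ := by
  rw [sol_init_apply hs hu]
  refine le_trans (hsand _).2 ?_
  exact hα₂.1.monoOn (norm_nonneg _) (norm_nonneg _) (ContinuousMap.norm_coe_le_norm x₀ _)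

/-- Uniform stability: `V (x t) ≤ α₂ ‖x₀‖` for all `t ∈ [0, tmax)`. -/
theorem stab
    (hf : LipOnBounded₀ f₀) (hs : IsSolution₀ Δ f₀ x₀ tmax x)
    (hV : ContDiff ℝ 1 V) (hVnonneg : ∀ z : Vec n, 0 ≤ V z)
    (hα₂ : ClassKinf α₂) (hsand : ∀ z : Vec n, α₁ ‖z‖ ≤ V z ∧ V z ≤ α₂ ‖z‖)
    (hα : ClassP α) (hρK : ClassKinf ρ)
    (hRaz : ∀ φ : Hist Δ n,
      ρ (⨆ τ : Icc (-(Δ : ℝ)) (0 : ℝ), V (φ τ)) ≤ V (ev0 φ) →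
        fderiv ℝ V (ev0 φ) (f₀ φ) ≤ -α ‖ev0 φ‖)
    (hρ : ∀ s : ℝ, 0 < s → ρ s < s) :
    ∀ t : ℝ, 0 ≤ t → (t : EReal) < tmax → V (x t) ≤ α₂ ‖x₀‖ := by
  intro t ht0 htm
  by_contra hcon
  push_neg at hcon
  set c := (α₂ ‖x₀‖ + V (x t)) / 2 with hcdef
  have hB0 : 0 ≤ α₂ ‖x₀‖ := hα₂.1.nonneg (norm_nonneg _)
  have hc1 : α₂ ‖x₀‖ < c := by rw [hcdef]; linarith
  have hc2 : c < V (x t) := by rw [hcdef]; linarith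
  have hcpos : 0 < c := lt_of_le_of_lt hB0 hc1
  have h0m : ((0 : ℝ) : EReal) < tmax := by
    have := hs.tmax_pos
    simpa using this
  have key := noup hf hs hV hVnonneg hα₂ hsand hα hρK hRaz (le_refl (0:ℝ)) h0m
    (le_refl c) hcpos (hρ c hcpos)
    (fun u hu => by
      refine le_trans (sol_init_V_bound hs hα₂ hsand ⟨by simpa using hu.1, hu.2⟩) hc1.le)
    (lt_of_le_of_lt (sol_init_V_bound hs hα₂ hsand ⟨by simp [Δ.coe_nonneg], le_rfl⟩) hc1)
  exact absurd (key t ht0 htm) (not_lt.2 hc2.le)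

/-- Uniform bound on the trajectory norm. -/
theorem sol_norm_bound
    (hf : LipOnBounded₀ f₀) (hs : IsSolution₀ Δ f₀ x₀ tmax x)
    (hV : ContDiff ℝ 1 V) (hVnonneg : ∀ z : Vec n, 0 ≤ V z)
    (hα₁ : ClassKinf α₁) (hα₂ : ClassKinf α₂)
    (hsand : ∀ z : Vec n, α₁ ‖z‖ ≤ V z ∧ V z ≤ α₂ ‖z‖)
    (hα : ClassP α) (hρK : ClassKinf ρ)
    (hRaz : ∀ φ : Hist Δ n,
      ρ (⨆ τ : Icc (-(Δ : ℝ)) (0 : ℝ), V (φ τ)) ≤ V (ev0 φ) →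
        fderiv ℝ V (ev0 φ) (f₀ φ) ≤ -α ‖ev0 φ‖)
    (hρ : ∀ s : ℝ, 0 < s → ρ s < s)
    {R : ℝ} (hR0 : 0 ≤ R) (hR : α₂ ‖x₀‖ ≤ α₁ R) :
    ∀ t : ℝ, -(Δ : ℝ) ≤ t → (t : EReal) < tmax → ‖x t‖ ≤ max R ‖x₀‖ := by
  intro t htl htm
  rcases le_or_gt t 0 with h | h
  · refine le_trans ?_ (le_max_right _ _)
    rw [sol_init_apply hs ⟨htl, h⟩]
    exact ContinuousMap.norm_coe_le_norm x₀ _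
  · refine le_trans ?_ (le_max_left _ _)
    by_contra hcon
    push_neg at hcon
    have h1 : α₁ R < α₁ ‖x t‖ := hα₁.1.2.1 hR0 (le_trans hR0 hcon.le) hcon
    have h2 : α₁ ‖x t‖ ≤ V (x t) := (hsand _).1
    have h3 := stab hf hs hV hVnonneg hα₂ hsand hα hρK hRaz hρ t h.le htm
    linarith

/-- Dwell: within time `a/γ` the value of `V` drops below `b`. -/
theorem dwell
    (hf : LipOnBounded₀ f₀) (hs : IsSolution₀ Δ f₀ x₀ tmax x)
    (hV : ContDiff ℝ 1 V) (hVnonneg : ∀ z : Vec n, 0 ≤ V z)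
    (hα : ClassP α) (hρK : ClassKinf ρ)
    (hRaz : ∀ φ : Hist Δ n,
      ρ (⨆ τ : Icc (-(Δ : ℝ)) (0 : ℝ), V (φ τ)) ≤ V (ev0 φ) →
        fderiv ℝ V (ev0 φ) (f₀ φ) ≤ -α ‖ev0 φ‖)
    (hTop : tmax = ⊤)
    {t₁ a b γ : ℝ} (ht₁ : 0 ≤ t₁) (hb : 0 < b) (hba : b ≤ a) (hρab : ρ a < b)
    (H : ∀ u : ℝ, t₁ - (Δ : ℝ) ≤ u → V (x u) ≤ a)
    (hγ : 0 < γ) (hγle : ∀ t : ℝ, t₁ ≤ t → b ≤ V (x t) → γ ≤ α ‖x t‖) :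
    ∃ t₂ ∈ Icc t₁ (t₁ + a / γ), V (x t₂) < b := by
  have hm : ∀ t : ℝ, (t : EReal) < tmax := fun t => by rw [hTop]; exact EReal.coe_lt_top t
  by_contra hcon
  push_neg at hcon
  set D := a / γ with hD
  have ha0 : 0 < a := lt_of_lt_of_le hb hba
  have hD0 : 0 ≤ D := div_nonneg ha0.le hγ.le
  set g := fun t : ℝ => V (x t) + γ * t with hg
  have hgder : ∀ t ∈ Ioo t₁ (t₁ + D),
      HasDerivAt g (fderiv ℝ V (x t) (f₀ (seg Δ x t)) + γ) t := by
    intro t ht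
    have h1 := Vx_hasDerivAt hf hs hV (lt_of_le_of_lt ht₁ ht.1) (hm t)
    have h2 : HasDerivAt (fun u : ℝ => γ * u) γ t := by
      simpa using (hasDerivAt_id t).const_mul γ
    exact h1.add h2
  have hderle : ∀ t ∈ Ioo t₁ (t₁ + D),
      fderiv ℝ V (x t) (f₀ (seg Δ x t)) + γ ≤ 0 := by
    intro t ht
    have hbV : b ≤ V (x t) := hcon t ⟨ht.1.le, ht.2.le⟩
    have hcontw : ContinuousOn x (Icc (t - (Δ : ℝ)) t) := by
      refine (sol_contOn hs (hm t)).mono fun u hu => ⟨?_, hu.2⟩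
      have ht0 : 0 < t := lt_of_le_of_lt ht₁ ht.1
      linarith [hu.1]
    have hraz := razumikhin_deriv hVnonneg hρK hRaz hcontw
      (fun u hu => H u (by linarith [hu.1, ht.1]))
      (le_trans hρab.le hbV)
    have hγα := hγle t ht.1.le hbV
    linarith
  have hanti : AntitoneOn g (Icc t₁ (t₁ + D)) := by
    refine antitoneOn_of_deriv_nonpos (convex_Icc _ _) ?_ ?_ ?_
    · have hVc : ContinuousOn (fun u => V (x u)) (Icc t₁ (t₁ + D)) := by
        refine hV.continuous.comp_continuousOn ((sol_contOn hs (hm (t₁ + D))).mono ?_)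
        intro u hu
        exact ⟨le_trans (neg_nonpos.2 Δ.coe_nonneg) (le_trans ht₁ hu.1), hu.2⟩
      exact hVc.add (continuous_const.mul continuous_id).continuousOn
    · rw [interior_Icc]
      exact fun t ht => (hgder t ht).differentiableAt.differentiableWithinAt
    · rw [interior_Icc]
      intro t ht
      rw [(hgder t ht).deriv]
      exact hderle t ht
  have hmem1 : t₁ ∈ Icc t₁ (t₁ + D) := ⟨le_rfl, by linarith⟩
  have hmem2 : t₁ + D ∈ Icc t₁ (t₁ + D) := ⟨by linarith, le_rfl⟩
  have := hanti hmem1 hmem2 (by linarith)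
  rw [hg] at this
  simp only [] at this
  have hγD : γ * D = a := by
    rw [hD]
    field_simp
  have hVt₁ : V (x t₁) ≤ a := H t₁ (by linarith [Δ.coe_nonneg])
  have hend : b ≤ V (x (t₁ + D)) := hcon _ hmem2
  nlinarith
end

noncomputable section

variable {Δ : ℝ≥0} {n : ℕ} {f₀ : Hist Δ n → Vec n} {x₀ : Hist Δ n} {x : ℝ → Vec n}

section Ext

variable {T R₀ L : ℝ}

/-- Norm bound on history segments along the solution. -/
theorem seg_bound (hT0 : 0 < T)
    (hR₀ : ∀ t : ℝ, -(Δ : ℝ) ≤ t → t < T → ‖x t‖ ≤ R₀)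
    (hR₀0 : 0 ≤ R₀) {s : ℝ} (hs0 : 0 ≤ s) (hsT : s < T) : ‖seg Δ x s‖ ≤ R₀ := by
  refine seg_norm_le hR₀0 fun u hu => hR₀ u (by linarith [hu.1, Δ.coe_nonneg]) (by linarith [hu.2])

theorem integrand_bound (hf : LipOnBounded₀ f₀) (hf0 : f₀ 0 = 0) (hT0 : 0 < T)
    (hR₀ : ∀ t : ℝ, -(Δ : ℝ) ≤ t → t < T → ‖x t‖ ≤ R₀) (hR₀0 : 0 ≤ R₀)
    (hL : 0 < L)
    (hLip : ∀ φ₁ φ₂ : Hist Δ n, ‖φ₁‖ ≤ R₀ + 2 → ‖φ₂‖ ≤ R₀ + 2 →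
      ‖f₀ φ₁ - f₀ φ₂‖ ≤ L * ‖φ₁ - φ₂‖)
    {s : ℝ} (hs0 : 0 ≤ s) (hsT : s < T) : ‖f₀ (seg Δ x s)‖ ≤ L * R₀ := by
  have h1 : ‖seg Δ x s‖ ≤ R₀ := seg_bound hT0 hR₀ hR₀0 hs0 hsT
  have h2 := f0_norm_le hf hf0 (r := R₀ + 2) (by linarith) hL hLip (le_trans h1 (by linarith))
  calc ‖f₀ (seg Δ x s)‖ ≤ L * ‖seg Δ x s‖ := h2
  _ ≤ L * R₀ := by nlinarith

/-- Lipschitz estimate on `[0,T)`. -/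
theorem sol_lip {tmax : EReal} (hs : IsSolution₀ Δ f₀ x₀ tmax x) (hTm : tmax = (T : EReal))
    {M : ℝ} (hM : ∀ s : ℝ, 0 ≤ s → s < T → ‖f₀ (seg Δ x s)‖ ≤ M)
    {t t' : ℝ} (ht0 : 0 ≤ t) (htt' : t ≤ t') (ht'T : t' < T) :
    ‖x t' - x t‖ ≤ M * (t' - t) := by
  have hm : ∀ u : ℝ, u < T → (u : EReal) < tmax := fun u hu => by
    rw [hTm]; exact_mod_cast hu
  have h1 := hs.integral_eq t ht0 (hm t (lt_of_le_of_lt htt' ht'T))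
  have h2 := hs.integral_eq t' (le_trans ht0 htt') (hm t' ht'T)
  have hi1 : IntervalIntegrable (fun s => f₀ (seg Δ x s)) volume 0 t :=
    hs.integrable t ht0 (hm t (lt_of_le_of_lt htt' ht'T))
  have hi2 : IntervalIntegrable (fun s => f₀ (seg Δ x s)) volume 0 t' :=
    hs.integrable t' (le_trans ht0 htt') (hm t' ht'T)
  have hi3 : IntervalIntegrable (fun s => f₀ (seg Δ x s)) volume t t' := by
    refine hi2.mono_set ?_
    rw [uIcc_of_le htt', uIcc_of_le (le_trans ht0 htt')]
    exact Icc_subset_Icc ht0 le_rfl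
  have hx : x t' - x t = ∫ s in t..t', f₀ (seg Δ x s) := by
    rw [h1, h2, ← intervalIntegral.integral_add_adjacent_intervals hi1 hi3]
    abel
  rw [hx]
  have hb := intervalIntegral.norm_integral_le_of_norm_le_const (C := M)
    (f := fun s => f₀ (seg Δ x s)) (a := t) (b := t') ?_
  · rwa [abs_of_nonneg (by linarith)] at hb
  · intro u hu
    rw [uIoc_of_le htt'] at hu
    exact hM u (le_trans ht0 hu.1.le) (lt_of_le_of_lt hu.2 ht'T)


/-- distance to the limit point -/
theorem sol_dist_lim {tmax : EReal} (hs : IsSolution₀ Δ f₀ x₀ tmax x)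
    (hTm : tmax = (T : EReal)) (hT0 : 0 < T)
    {M : ℝ} (hM0 : 0 ≤ M) (hM : ∀ s : ℝ, 0 ≤ s → s < T → ‖f₀ (seg Δ x s)‖ ≤ M) :
    ∃ xb : Vec n, ∀ t : ℝ, 0 ≤ t → t < T → dist (x t) xb ≤ M * (T - t) := by
  set u : ℕ → ℝ := fun k => T - T / (k + 1) with hu
  have hu0 : ∀ k : ℕ, 0 ≤ u k := by
    intro k
    rw [hu]
    have h1 : T / (k + 1) ≤ T / 1 := by
      apply div_le_div_of_nonneg_left hT0.le one_pos
      exact_mod_cast Nat.succ_le_succ (Nat.zero_le k)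
    simp only []
    rw [div_one] at h1
    linarith
  have huT : ∀ k : ℕ, u k < T := by
    intro k
    rw [hu]
    have : 0 < T / (k + 1) := by positivity
    simp only []
    linarith
  have humono : Monotone u := by
    intro j k hjk
    rw [hu]
    simp only []
    have : T / (k + 1) ≤ T / (j + 1) := by
      apply div_le_div_of_nonneg_left hT0.le (by positivity)
      exact_mod_cast Nat.succ_le_succ hjk
    linarith
  have hcs : CauchySeq fun k => x (u k) := by
    rw [Metric.cauchySeq_iff']
    intro ε hε
    obtain ⟨N, hN⟩ := exists_nat_gt (M * T / ε)
    refine ⟨N, fun k hk => ?_⟩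
    have h1 : ‖x (u k) - x (u N)‖ ≤ M * (u k - u N) :=
      sol_lip hs hTm hM (hu0 N) (humono hk) (huT k)
    rw [dist_eq_norm]
    have h2 : u k - u N ≤ T / (N + 1) := by
      rw [hu]
      simp only []
      have : 0 < T / (k + 1) := by positivity
      linarith
    have h3 : M * (u k - u N) ≤ M * (T / (N + 1)) := by
      apply mul_le_mul_of_nonneg_left h2 hM0
    have h4 : M * (T / (N + 1)) < ε := by
      rw [div_lt_iff₀ hε] at hN
      rw [← mul_div_assoc, div_lt_iff₀ (by positivity : (0:ℝ) < (N:ℝ) + 1)]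
      nlinarith
    exact lt_of_le_of_lt (le_trans h1 h3) h4
  obtain ⟨xb, hxb⟩ := cauchySeq_tendsto_of_complete hcs
  refine ⟨xb, fun t ht0 htT => ?_⟩
  have htend : Tendsto (fun k => dist (x t) (x (u k))) atTop (𝓝 (dist (x t) xb)) :=
    (Continuous.tendsto (continuous_const.dist continuous_id) xb).comp hxb
  refine le_of_tendsto htend ?_
  have hev : ∀ᶠ k : ℕ in atTop, t ≤ u k := by
    have : Tendsto u atTop (𝓝 T) := by
      have h0 : Tendsto (fun k : ℕ => 1 / ((k:ℝ) + 1)) atTop (𝓝 0) :=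
        tendsto_one_div_add_atTop_nhds_zero_nat
      have h1 : Tendsto (fun k : ℕ => T - T * (1 / ((k:ℝ) + 1))) atTop (𝓝 (T - T * 0)) :=
        tendsto_const_nhds.sub (tendsto_const_nhds.mul h0)
      rw [hu]
      convert h1 using 2 with k
      · rw [mul_one_div]
      · rw [mul_zero, sub_zero]
    have h2 : Ioi t ∈ 𝓝 T := Ioi_mem_nhds htT
    exact (this.eventually_mem h2).mono fun k hk => le_of_lt hk
  filter_upwards [hev] with k hk
  rw [dist_comm, dist_eq_norm]
  calc ‖x (u k) - x t‖ ≤ M * (u k - t) := sol_lip hs hTm hM ht0 hk (huT k)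
  _ ≤ M * (T - t) := mul_le_mul_of_nonneg_left (by linarith [huT k]) hM0

end Ext

end

noncomputable section

variable {Δ : ℝ≥0} {n : ℕ} {f₀ : Hist Δ n → Vec n} {x₀ : Hist Δ n} {x : ℝ → Vec n}

set_option maxHeartbeats 2000000 in
theorem sol_extend (hf : LipOnBounded₀ f₀) (hf0 : f₀ 0 = 0)
    {tmax : EReal} (hs : IsSolution₀ Δ f₀ x₀ tmax x) {T : ℝ}
    (hTm : tmax = (T : EReal)) (hT0 : 0 < T)
    {R₀ : ℝ} (hR₀0 : 0 ≤ R₀) (hR₀ : ∀ t : ℝ, -(Δ : ℝ) ≤ t → t < T → ‖x t‖ ≤ R₀) :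
    ∃ (tmax' : EReal) (x' : ℝ → Vec n), IsSolution₀ Δ f₀ x₀ tmax' x' ∧
      (∀ t : ℝ, -(Δ : ℝ) ≤ t → t < T → x' t = x t) ∧ tmax < tmax' := by
  obtain ⟨L, hL, hLip⟩ := hf (R₀ + 2) (by linarith)
  set M := L * R₀ with hMdef
  have hM0 : 0 ≤ M := by positivity
  have hM : ∀ s : ℝ, 0 ≤ s → s < T → ‖f₀ (seg Δ x s)‖ ≤ M :=
    fun s h1 h2 => integrand_bound hf hf0 hT0 hR₀ hR₀0 hL hLip h1 h2
  obtain ⟨xb, hxb⟩ := sol_dist_lim hs hTm hT0 hM0 hM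
  have hΔT : -(Δ : ℝ) < T := lt_of_le_of_lt (neg_nonpos.2 Δ.coe_nonneg) hT0
  -- limit of x at T from the left
  have hxlim : Tendsto x (𝓝[<] T) (𝓝 xb) := by
    rw [Metric.tendsto_nhdsWithin_nhds]
    intro ε hε
    refine ⟨min T (ε / (M + 1)), lt_min hT0 (by positivity), fun {t} ht hd => ?_⟩
    rw [Real.dist_eq, abs_of_neg (sub_neg.2 ht)] at hd
    rw [lt_min_iff] at hd
    have ht0 : 0 ≤ t := by linarith [hd.1]
    calc dist (x t) xb ≤ M * (T - t) := hxb t ht0 ht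
    _ ≤ M * (ε / (M + 1)) := mul_le_mul_of_nonneg_left (by linarith [hd.2]) hM0
    _ < ε := by rw [mul_div_assoc', div_lt_iff₀ (by positivity : (0:ℝ) < M + 1)]; nlinarith
  have hxbR : ‖xb‖ ≤ R₀ := by
    refine le_of_tendsto hxlim.norm ?_
    filter_upwards [Ioo_mem_nhdsLT_of_mem (⟨hΔT, le_rfl⟩ : T ∈ Ioc (-(Δ:ℝ)) T)] with t ht
    exact hR₀ t ht.1.le ht.2
  -- the glued function y
  set y : ℝ → Vec n := fun t => if t < T then x (max t (-(Δ : ℝ))) else xb with hy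
  have hyT : y T = xb := by rw [hy]; simp
  have hy_eq : ∀ t : ℝ, -(Δ : ℝ) ≤ t → t < T → y t = x t := by
    intro t h1 h2
    simp only [hy]
    rw [if_pos h2, max_eq_left h1]
  have hybound : ∀ t : ℝ, ‖y t‖ ≤ R₀ := by
    intro t
    by_cases h : t < T
    · rw [show y t = x (max t (-(Δ:ℝ))) from by simp only [hy]; rw [if_pos h]]
      exact hR₀ _ (le_max_right _ _) (max_lt h hΔT)
    · rw [show y t = xb from by simp only [hy]; rw [if_neg h]]
      exact hxbR
  have hycont : Continuous y := by
    rw [continuous_iff_continuousAt]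
    intro t₀
    rcases lt_trichotomy t₀ T with h | h | h
    · set K := max ((t₀ + T) / 2) (-(Δ : ℝ)) with hK
      have hKT : K < T := max_lt (by linarith) hΔT
      have ht₀K : t₀ < K := lt_of_lt_of_le (by linarith) (le_max_left _ _)
      have hΔK : -(Δ : ℝ) ≤ K := le_max_right _ _
      have hcl : Continuous fun t => x (max (-(Δ : ℝ)) (min t K)) :=
        continuous_clamp hΔK (sol_contOn hs (by rw [hTm]; exact_mod_cast hKT))
      refine hcl.continuousAt.congr ?_
      filter_upwards [Iio_mem_nhds ht₀K] with t ht
      simp only [hy]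
      rw [if_pos (lt_trans ht hKT), min_eq_left ht.le, max_comm]
    · subst h
      rw [Metric.continuousAt_iff]
      intro ε hε
      refine ⟨min t₀ (ε / (M + 1)), lt_min hT0 (by positivity), fun {t} hd => ?_⟩
      rw [hyT]
      by_cases h' : t < t₀
      · rw [Real.dist_eq, abs_of_neg (sub_neg.2 h')] at hd
        rw [lt_min_iff] at hd
        have ht0 : 0 ≤ t := by linarith [hd.1]
        rw [hy_eq t (by linarith [Δ.coe_nonneg]) h']
        calc dist (x t) xb ≤ M * (t₀ - t) := hxb t ht0 h'
        _ ≤ M * (ε / (M + 1)) := mul_le_mul_of_nonneg_left (by linarith [hd.2]) hM0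
        _ < ε := by rw [mul_div_assoc', div_lt_iff₀ (by positivity : (0:ℝ) < M + 1)]; nlinarith
      · rw [show y t = xb from by simp only [hy]; rw [if_neg h']]
        rw [dist_self]
        exact hε
    · refine ContinuousAt.congr (f := fun _ : ℝ => xb) continuousAt_const ?_
      filter_upwards [Ioi_mem_nhds h] with t ht
      show xb = y t
      simp only [hy]
      rw [if_neg (not_lt.2 (le_of_lt ht))]
  clear hxb
  -- the fixed-point setup
  set ε := min (1/(2*L)) (1/(L*(R₀+2))) with hεdef
  have hε : 0 < ε := lt_min (by positivity) (by positivity)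
  have hLε : L * ε ≤ 1/2 := by
    have h1 : ε ≤ 1/(2*L) := min_le_left _ _
    calc L * ε ≤ L * (1/(2*L)) := mul_le_mul_of_nonneg_left h1 hL.le
    _ = 1/2 := by field_simp
  have hLRε : L * (R₀+2) * ε ≤ 1 := by
    have h2 : ε ≤ 1/(L*(R₀+2)) := min_le_right _ _
    calc L*(R₀+2)*ε ≤ L*(R₀+2)*(1/(L*(R₀+2))) :=
          mul_le_mul_of_nonneg_left h2 (by positivity)
    _ = 1 := by field_simp
  have hmem0 : (0:ℝ) ∈ Icc (0:ℝ) ε := ⟨le_rfl, hε.le⟩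
  have hmemp : ∀ t : ℝ, max 0 (min (t - T) ε) ∈ Icc (0:ℝ) ε :=
    fun t => ⟨le_max_left _ _, max_le hε.le (min_le_right _ _)⟩
  set proj : ℝ → Icc (0:ℝ) ε := fun t => ⟨max 0 (min (t - T) ε), hmemp t⟩ with hproj
  have hprojcont : Continuous proj :=
    Continuous.subtype_mk (continuous_const.max
      ((continuous_id.sub continuous_const).min continuous_const)) _
  set ext : C(Icc (0:ℝ) ε, Vec n) → ℝ → Vec n :=
    fun z t => if t ≤ T then y t else z (proj t) with hext
  set S : Set C(Icc (0:ℝ) ε, Vec n) :=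
    {z | z ⟨0, hmem0⟩ = xb ∧ ∀ u, ‖z u - xb‖ ≤ 1} with hS
  have hprojT : proj T = ⟨0, hmem0⟩ := by
    rw [hproj]
    apply Subtype.ext
    simp [hε.le]
  have hextcont : ∀ z : C(Icc (0:ℝ) ε, Vec n), z ⟨0, hmem0⟩ = xb → Continuous (ext z) := by
    intro z hz0
    rw [hext]
    refine Continuous.if_le hycont (z.continuous.comp hprojcont) continuous_id continuous_const ?_
    intro t ht
    subst ht
    rw [hyT, hprojT, hz0]
  have hext_le : ∀ (z) (t : ℝ), t ≤ T → ext z t = y t := by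
    intro z t ht
    rw [hext]
    exact if_pos ht
  have hext_gt : ∀ (z) (t : ℝ), T < t → ext z t = z (proj t) := by
    intro z t ht
    rw [hext]
    exact if_neg (not_le.2 ht)
  have hext_bound : ∀ z ∈ S, ∀ t : ℝ, ‖ext z t‖ ≤ R₀ + 1 := by
    intro z hz t
    by_cases h : t ≤ T
    · rw [hext_le z t h]
      linarith [hybound t]
    · push_neg at h
      rw [hext_gt z t h, ← sub_add_cancel (z (proj t)) xb]
      exact le_trans (norm_add_le _ _) (by linarith [hz.2 (proj t)])
  have hsegb : ∀ z ∈ S, ∀ u : ℝ, ‖seg Δ (ext z) u‖ ≤ R₀ + 1 := fun z hz u =>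
    seg_norm_le (by linarith) fun v _ => hext_bound z hz v
  have hfb' : ∀ z ∈ S, ∀ u : ℝ, ‖f₀ (seg Δ (ext z) u)‖ ≤ L * (R₀ + 1) := by
    intro z hz u
    have h1 := hsegb z hz u
    have h2 := f0_norm_le hf hf0 (r := R₀+2) (by linarith) hL hLip (le_trans h1 (by linarith))
    nlinarith [norm_nonneg (seg Δ (ext z) u)]
  have hsegdiff : ∀ z₁ z₂ : C(Icc (0:ℝ) ε, Vec n), z₁ ∈ S → z₂ ∈ S → ∀ u : ℝ,
      ‖seg Δ (ext z₁) u - seg Δ (ext z₂) u‖ ≤ dist z₁ z₂ := by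
    intro z₁ z₂ h₁ h₂ u
    have hc₁ : Continuous (ext z₁) := hextcont z₁ h₁.1
    have hc₂ : Continuous (ext z₂) := hextcont z₂ h₂.1
    rw [ContinuousMap.norm_le _ dist_nonneg]
    intro τ
    rw [ContinuousMap.sub_apply, seg_apply hc₁.continuousOn, seg_apply hc₂.continuousOn]
    by_cases h : u + τ.1 ≤ T
    · rw [hext_le _ _ h, hext_le _ _ h, sub_self, norm_zero]
      exact dist_nonneg
    · push_neg at h
      rw [hext_gt _ _ h, hext_gt _ _ h, ← dist_eq_norm]
      exact ContinuousMap.dist_apply_le_dist _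
  have hintc : ∀ z ∈ S, Continuous fun s : ℝ => f₀ (seg Δ (ext z) (T + s)) := by
    intro z hz
    exact (f0_continuous hf).comp ((continuous_seg (hextcont z hz.1)).comp
      (continuous_const.add continuous_id))
  set Φf : C(Icc (0:ℝ) ε, Vec n) → ℝ → Vec n :=
    fun z u => xb + ∫ s in (0:ℝ)..u, f₀ (seg Δ (ext z) (T + s)) with hΦf
  have hΦcont : ∀ z ∈ S, Continuous (Φf z) := by
    intro z hz
    rw [hΦf]
    exact continuous_const.add
      (intervalIntegral.continuous_primitive (fun a b => (hintc z hz).intervalIntegrable a b) 0)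
  have hΦ0 : ∀ z, Φf z 0 = xb := by
    intro z
    rw [hΦf]
    simp
  have hΦdist1 : ∀ z ∈ S, ∀ u ∈ Icc (0:ℝ) ε, ‖Φf z u - xb‖ ≤ 1 := by
    intro z hz u hu
    rw [hΦf]
    simp only [add_sub_cancel_left]
    have hb := intervalIntegral.norm_integral_le_of_norm_le_const (C := L * (R₀+1))
      (f := fun s => f₀ (seg Δ (ext z) (T + s))) (a := 0) (b := u)
      (fun s _ => hfb' z hz (T + s))
    rw [sub_zero, abs_of_nonneg hu.1] at hb
    calc ‖∫ s in (0:ℝ)..u, f₀ (seg Δ (ext z) (T + s))‖ ≤ L*(R₀+1) * u := hb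
    _ ≤ 1 := by nlinarith [hu.2, hL, hR₀0, hε]
  have hSclosed : IsClosed S := by
    have h1 : IsClosed {z : C(Icc (0:ℝ) ε, Vec n) | z ⟨0, hmem0⟩ = xb} :=
      isClosed_eq (continuous_eval_const _) continuous_const
    have h2 : IsClosed {z : C(Icc (0:ℝ) ε, Vec n) | ∀ u, ‖z u - xb‖ ≤ 1} := by
      have he : {z : C(Icc (0:ℝ) ε, Vec n) | ∀ u, ‖z u - xb‖ ≤ 1} =
          ⋂ u, {z : C(Icc (0:ℝ) ε, Vec n) | ‖z u - xb‖ ≤ 1} := by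
        ext z
        simp [mem_iInter]
      rw [he]
      refine isClosed_iInter fun u => ?_
      exact isClosed_le (Continuous.norm
        ((continuous_eval_const u).sub continuous_const)) continuous_const
    exact h1.inter h2
  haveI hcompl : CompleteSpace ↥S := hSclosed.completeSpace_coe
  haveI hSne : Nonempty ↥S := ⟨⟨ContinuousMap.const _ xb, rfl, fun u => by simp⟩⟩
  set ΦS : ↥S → ↥S := fun z => ⟨⟨fun u => Φf z.1 u.1,
      (hΦcont z.1 z.2).comp continuous_subtype_val⟩, by
    constructor
    · show Φf z.1 ((⟨0, hmem0⟩ : Icc (0:ℝ) ε) : ℝ) = xb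
      exact hΦ0 z.1
    · intro u
      exact hΦdist1 z.1 z.2 u.1 u.2⟩ with hΦS
  have hcontr : ContractingWith (1/2 : ℝ≥0) ΦS := by
    constructor
    · rw [← NNReal.coe_lt_coe]
      norm_num
    · refine LipschitzWith.of_dist_le_mul fun z₁ z₂ => ?_
      have hhalf : ((1/2 : ℝ≥0) : ℝ) = 1/2 := by norm_num
      rw [Subtype.dist_eq (ΦS z₁) (ΦS z₂), Subtype.dist_eq z₁ z₂, hhalf]
      have hnn : 0 ≤ 1/2 * dist (z₁ : C(Icc (0:ℝ) ε, Vec n)) (z₂ : C(Icc (0:ℝ) ε, Vec n)) := by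
        positivity
      rw [ContinuousMap.dist_le hnn]
      intro u
      show dist (Φf z₁.1 u.1) (Φf z₂.1 u.1) ≤ _
      rw [hΦf]
      simp only [dist_add_left]
      rw [dist_eq_norm, ← intervalIntegral.integral_sub
        ((hintc z₁.1 z₁.2).intervalIntegrable 0 u.1)
        ((hintc z₂.1 z₂.2).intervalIntegrable 0 u.1)]
      have hb := intervalIntegral.norm_integral_le_of_norm_le_const
        (C := L * dist (z₁ : C(Icc (0:ℝ) ε, Vec n)) (z₂ : C(Icc (0:ℝ) ε, Vec n)))
        (f := fun s => f₀ (seg Δ (ext z₁.1) (T + s)) - f₀ (seg Δ (ext z₂.1) (T + s)))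
        (a := 0) (b := u.1) ?_
      · rw [sub_zero, abs_of_nonneg u.2.1] at hb
        refine le_trans hb ?_
        have hd : 0 ≤ dist (z₁ : C(Icc (0:ℝ) ε, Vec n)) (z₂ : C(Icc (0:ℝ) ε, Vec n)) :=
          dist_nonneg
        have hu2 : u.1 ≤ ε := u.2.2
        nlinarith [mul_le_mul_of_nonneg_left hu2 (mul_nonneg hL.le hd),
          mul_le_mul_of_nonneg_right hLε hd]
      · intro s _
        have h1 := hsegb z₁.1 z₁.2 (T + s)
        have h2 := hsegb z₂.1 z₂.2 (T + s)
        have h3 := hLip _ _ (le_trans h1 (by linarith)) (le_trans h2 (by linarith))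
        refine le_trans h3 ?_
        exact mul_le_mul_of_nonneg_left (hsegdiff z₁.1 z₂.1 z₁.2 z₂.2 (T + s)) hL.le
  set zs := ContractingWith.fixedPoint ΦS hcontr with hzs
  have hfix : ΦS zs = zs := hcontr.fixedPoint_isFixedPt
  set x' : ℝ → Vec n := ext zs.1 with hx'
  have hx'cont : Continuous x' := hextcont zs.1 zs.2.1
  have hfixev : ∀ u : Icc (0:ℝ) ε, zs.1 u = xb + ∫ s in (0:ℝ)..u.1, f₀ (seg Δ x' (T + s)) := by
    intro u
    conv_lhs => rw [← hfix]
    rfl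
  have hF'c : Continuous fun s : ℝ => f₀ (seg Δ x' s) :=
    (f0_continuous hf).comp (continuous_seg hx'cont)
  have hagree : ∀ t : ℝ, -(Δ : ℝ) ≤ t → t < T → x' t = x t := by
    intro t h1 h2
    rw [hx', hext_le _ _ h2.le, hy_eq t h1 h2]
  have hx'0 : x' 0 = x 0 := hagree 0 (neg_nonpos.2 Δ.coe_nonneg) hT0
  have hsegeq : ∀ s : ℝ, 0 ≤ s → s < T → seg Δ x' s = seg Δ x s := by
    intro s h1 h2
    have hsm : (s : EReal) < tmax := by rw [hTm]; exact_mod_cast h2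
    have hsub : Icc (s - (Δ:ℝ)) s ⊆ Icc (-(Δ:ℝ)) s := fun v hv =>
      ⟨by linarith [hv.1, Δ.coe_nonneg], hv.2⟩
    refine seg_congr hx'cont.continuousOn ((sol_contOn hs hsm).mono hsub) ?_
    intro v hv
    exact hagree v (by linarith [hv.1, Δ.coe_nonneg]) (lt_of_le_of_lt hv.2 h2)
  have hxteq : ∀ t : ℝ, 0 ≤ t → t < T → x' t = x' 0 + ∫ s in (0:ℝ)..t, f₀ (seg Δ x' s) := by
    intro t h1 h2
    rw [hagree t (by linarith [Δ.coe_nonneg]) h2,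
      hs.integral_eq t h1 (by rw [hTm]; exact_mod_cast h2), ← hx'0]
    congr 1
    refine (intervalIntegral.integral_congr fun s hsu => ?_).symm
    rw [uIcc_of_le h1] at hsu
    rw [hsegeq s hsu.1 (lt_of_le_of_lt hsu.2 h2)]
  have hIT : x' 0 + ∫ s in (0:ℝ)..T, f₀ (seg Δ x' s) = xb := by
    have hGc : Continuous fun u => x' 0 + ∫ s in (0:ℝ)..u, f₀ (seg Δ x' s) :=
      continuous_const.add
        (intervalIntegral.continuous_primitive (fun a b => hF'c.intervalIntegrable a b) 0)
    have h1 : Tendsto (fun u => x' 0 + ∫ s in (0:ℝ)..u, f₀ (seg Δ x' s)) (𝓝[<] T)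
        (𝓝 (x' 0 + ∫ s in (0:ℝ)..T, f₀ (seg Δ x' s))) :=
      (hGc.tendsto T).mono_left nhdsWithin_le_nhds
    have hev : (fun u => x' 0 + ∫ s in (0:ℝ)..u, f₀ (seg Δ x' s)) =ᶠ[𝓝[<] T] x := by
      filter_upwards [Ioo_mem_nhdsLT_of_mem (⟨hT0, le_rfl⟩ : T ∈ Ioc 0 T)] with t ht
      rw [← hxteq t ht.1.le ht.2, hagree t (by linarith [ht.1, Δ.coe_nonneg]) ht.2]
    exact tendsto_nhds_unique (Tendsto.congr' hev h1) hxlim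
  have hchg : ∀ t : ℝ, (∫ s in (0:ℝ)..(t - T), f₀ (seg Δ x' (T + s)))
      = ∫ s in T..t, f₀ (seg Δ x' s) := by
    intro t
    have h1 : (fun s => f₀ (seg Δ x' (T + s))) = fun s => f₀ (seg Δ x' (s + T)) := by
      funext s
      rw [add_comm]
    rw [h1, intervalIntegral.integral_comp_add_right (fun s => f₀ (seg Δ x' s)) T,
      zero_add, sub_add_cancel]
  have htail : ∀ t : ℝ, T ≤ t → t ≤ T + ε →
      x' t = x' 0 + ∫ s in (0:ℝ)..t, f₀ (seg Δ x' s) := by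
    intro t h1 h2
    have hx't : x' t = xb + ∫ s in (0:ℝ)..(t-T), f₀ (seg Δ x' (T + s)) := by
      rcases eq_or_lt_of_le h1 with h | h
      · rw [← h, hx', hext_le _ _ le_rfl, hyT, sub_self, intervalIntegral.integral_same,
          add_zero]
      · have hmem : t - T ∈ Icc (0:ℝ) ε := ⟨by linarith, by linarith⟩
        have hfe := hfixev ⟨t - T, hmem⟩
        have hp : proj t = ⟨t - T, hmem⟩ := by
          rw [hproj]
          apply Subtype.ext
          show max 0 (min (t - T) ε) = t - T
          rw [min_eq_left (by linarith), max_eq_right (by linarith)]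
        rw [hx', hext_gt _ _ h, hp, hfe]
    rw [hx't, hchg t, ← hIT, add_assoc]
    congr 1
    exact (intervalIntegral.integral_add_adjacent_intervals
      (hF'c.intervalIntegrable 0 T) (hF'c.intervalIntegrable T t))
  refine ⟨((T + ε : ℝ) : EReal), x', ?_, hagree, ?_⟩
  · constructor
    · exact_mod_cast (show (0:ℝ) < T + ε by linarith)
    · exact hx'cont.continuousOn
    · intro τ
      rw [hx', hext_le _ _ (le_trans τ.2.2 hT0.le), hy_eq _ τ.2.1 (lt_of_le_of_lt τ.2.2 hT0)]
      exact hs.init τ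
    · intro t _ _
      exact hF'c.intervalIntegrable 0 t
    · intro t h1 h2
      rcases lt_or_ge t T with h | h
      · exact hxteq t h1 h
      · have h2' : t < T + ε := by exact_mod_cast h2
        exact htail t h h2'.le
  · rw [hTm]
    exact_mod_cast (show T < T + ε by linarith)

end

noncomputable section

variable {Δ : ℝ≥0} {n : ℕ} {f₀ : Hist Δ n → Vec n} {V : Vec n → ℝ}
  {α₁ α₂ α ρ : ℝ → ℝ}

theorem zero_is_maxsol (hf0 : f₀ 0 = 0) :
    IsMaxSolution₀ Δ f₀ 0 ⊤ (fun _ : ℝ => (0 : Vec n)) := by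
  have hseg : (fun s : ℝ => f₀ (seg Δ (fun _ : ℝ => (0 : Vec n)) s)) = fun _ => (0 : Vec n) :=
    funext fun s => by rw [seg_zero, hf0]
  constructor
  · constructor
    · exact lt_of_lt_of_le (by norm_num : (0 : EReal) < 1) le_top
    · exact continuousOn_const
    · intro τ
      rfl
    · intro t _ _
      show IntervalIntegrable _ volume 0 t
      rw [show (fun s : ℝ => (fun φ (_ : Vec 0) => f₀ φ) (seg Δ (fun _ : ℝ => (0:Vec n)) s)
        ((fun _ => 0) s)) = fun _ : ℝ => (0 : Vec n) from hseg]
      exact intervalIntegrable_const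
    · intro t _ _
      show (0 : Vec n) = 0 + _
      rw [show (fun s : ℝ => (fun φ (_ : Vec 0) => f₀ φ) (seg Δ (fun _ : ℝ => (0:Vec n)) s)
        ((fun _ => 0) s)) = fun _ : ℝ => (0 : Vec n) from hseg]
      simp
  · intro tmax' x' _ _
    exact le_top

/-- Every maximal solution is global. -/
theorem maxsol_tmax_top
    (hf : LipOnBounded₀ f₀) (hf0 : f₀ 0 = 0)
    (hV : ContDiff ℝ 1 V) (hVnonneg : ∀ z : Vec n, 0 ≤ V z)
    (hα₁ : ClassKinf α₁) (hα₂ : ClassKinf α₂)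
    (hsand : ∀ z : Vec n, α₁ ‖z‖ ≤ V z ∧ V z ≤ α₂ ‖z‖)
    (hα : ClassP α) (hρK : ClassKinf ρ)
    (hRaz : ∀ φ : Hist Δ n,
      ρ (⨆ τ : Icc (-(Δ : ℝ)) (0 : ℝ), V (φ τ)) ≤ V (ev0 φ) →
        fderiv ℝ V (ev0 φ) (f₀ φ) ≤ -α ‖ev0 φ‖)
    (hρ : ∀ s : ℝ, 0 < s → ρ s < s)
    {x₀ : Hist Δ n} {tmax : EReal} {x : ℝ → Vec n}
    (hmax : IsMaxSolution₀ Δ f₀ x₀ tmax x) : tmax = ⊤ := by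
  by_contra hne
  have hsol : IsSolution₀ Δ f₀ x₀ tmax x := hmax.1
  have hpos := hsol.tmax_pos
  obtain ⟨T, hTm⟩ : ∃ T : ℝ, tmax = (T : EReal) := by
    rcases tmax with _ | _ | T
    · exact absurd hpos not_lt_bot
    · exact absurd rfl hne
    · exact ⟨T, rfl⟩
  have hT0 : 0 < T := by
    rw [hTm] at hpos
    exact_mod_cast hpos
  obtain ⟨R, hR⟩ := ((hα₁.2.eventually_ge_atTop (α₂ ‖x₀‖)).and (eventually_ge_atTop 0)).exists
  have hbound : ∀ t : ℝ, -(Δ : ℝ) ≤ t → t < T → ‖x t‖ ≤ max R ‖x₀‖ := by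
    intro t h1 h2
    exact sol_norm_bound hf hsol hV hVnonneg hα₁ hα₂ hsand hα hρK hRaz hρ hR.2 hR.1 t h1
      (by rw [hTm]; exact_mod_cast h2)
  obtain ⟨tmax', x', hsol', hagree, hlt⟩ := sol_extend hf hf0 hsol hTm hT0
    (le_trans hR.2 (le_max_left _ _)) hbound
  have := hmax.2 tmax' x' hsol' (fun t h1 h2 => hagree t h1 (by
    rw [hTm] at h2
    exact_mod_cast h2))
  exact absurd this (not_le.2 hlt)

section Stage

variable (ρ) in
/-- the staircase level sequence -/
def aSeq (B : ℝ) : ℕ → ℝ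
  | 0 => B + 1
  | k + 1 => (aSeq B k + ρ (aSeq B k)) / 2

theorem aSeq_pos (hρK : ClassKinf ρ) {B : ℝ} (hB : 0 ≤ B) : ∀ k, 0 < aSeq ρ B k := by
  intro k
  induction k with
  | zero => show 0 < B + 1; linarith
  | succ k ih =>
    show 0 < (aSeq ρ B k + ρ (aSeq ρ B k)) / 2
    have := hρK.1.nonneg ih.le
    linarith

theorem aSeq_step (hρK : ClassKinf ρ) (hρ : ∀ s : ℝ, 0 < s → ρ s < s) {B : ℝ} (hB : 0 ≤ B) (k : ℕ) :
    ρ (aSeq ρ B k) < aSeq ρ B (k+1) ∧ aSeq ρ B (k+1) < aSeq ρ B k := by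
  have h1 := hρ _ (aSeq_pos hρK hB k)
  constructor
  · show _ < (aSeq ρ B k + ρ (aSeq ρ B k)) / 2
    linarith
  · show (aSeq ρ B k + ρ (aSeq ρ B k)) / 2 < _
    linarith

theorem aSeq_anti (hρK : ClassKinf ρ) (hρ : ∀ s : ℝ, 0 < s → ρ s < s) {B : ℝ} (hB : 0 ≤ B) :
    ∀ j k, j ≤ k → aSeq ρ B k ≤ aSeq ρ B j := by
  intro j k hjk
  induction k with
  | zero => rw [Nat.le_zero.1 hjk]
  | succ k ih =>
    rcases Nat.lt_or_ge j (k+1) with h | h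
    · exact le_trans (aSeq_step hρK hρ hB k).2.le (ih (Nat.lt_succ_iff.1 h))
    · rw [Nat.le_antisymm hjk h]

theorem aSeq_tendsto (hρK : ClassKinf ρ) (hρ : ∀ s : ℝ, 0 < s → ρ s < s) {B : ℝ} (hB : 0 ≤ B) :
    Tendsto (aSeq ρ B) atTop (𝓝 0) := by
  have hanti : Antitone (aSeq ρ B) := antitone_nat_of_succ_le fun k => (aSeq_step hρK hρ hB k).2.le
  have hbdd : BddBelow (range (aSeq ρ B)) := ⟨0, by rintro y ⟨k, rfl⟩; exact (aSeq_pos hρK hB k).le⟩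
  have htend := tendsto_atTop_ciInf hanti hbdd
  set l := ⨅ k, aSeq ρ B k with hl
  have hl0 : 0 ≤ l := le_ciInf fun k => (aSeq_pos hρK hB k).le
  have hρl : ρ l = l := by
    have h1 : Tendsto (fun k => aSeq ρ B (k+1)) atTop (𝓝 l) :=
      htend.comp (tendsto_add_atTop_nat 1)
    have h2 : Tendsto (fun k => (aSeq ρ B k + ρ (aSeq ρ B k)) / 2) atTop (𝓝 ((l + ρ l)/2)) := by
      have hρc : Tendsto (fun k => ρ (aSeq ρ B k)) atTop (𝓝 (ρ l)) := by
        have hwithin : Tendsto (aSeq ρ B) atTop (𝓝[Ici 0] l) := by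
          rw [tendsto_nhdsWithin_iff]
          exact ⟨htend, Eventually.of_forall fun k => (aSeq_pos hρK hB k).le⟩
        exact (hρK.1.1 l hl0).tendsto.comp hwithin
      exact (htend.add hρc).div_const 2
    have h3 : l = (l + ρ l) / 2 := tendsto_nhds_unique h1 h2
    linarith
  rcases eq_or_lt_of_le hl0 with h | h
  · rwa [← h] at htend
  · exact absurd hρl (ne_of_lt (hρ l h))

end Stage

end

noncomputable section

variable {Δ : ℝ≥0} {n : ℕ} {f₀ : Hist Δ n → Vec n} {V : Vec n → ℝ}
  {α₁ α₂ α ρ : ℝ → ℝ}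

/-- Uniform staged attractivity over all maximal solutions from a ball. -/
theorem stage_claim
    (hf : LipOnBounded₀ f₀) (hf0 : f₀ 0 = 0)
    (hV : ContDiff ℝ 1 V) (hVnonneg : ∀ z : Vec n, 0 ≤ V z)
    (hα₁ : ClassKinf α₁) (hα₂ : ClassKinf α₂)
    (hsand : ∀ z : Vec n, α₁ ‖z‖ ≤ V z ∧ V z ≤ α₂ ‖z‖)
    (hα : ClassP α) (hρK : ClassKinf ρ)
    (hRaz : ∀ φ : Hist Δ n,
      ρ (⨆ τ : Icc (-(Δ : ℝ)) (0 : ℝ), V (φ τ)) ≤ V (ev0 φ) →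
        fderiv ℝ V (ev0 φ) (f₀ φ) ≤ -α ‖ev0 φ‖)
    (hρ : ∀ s : ℝ, 0 < s → ρ s < s)
    {s : ℝ} (hs0 : 0 ≤ s) (k : ℕ) :
    ∃ Tk : ℝ, 0 ≤ Tk ∧ ∀ (x₀ : Hist Δ n) (tmax : EReal) (x : ℝ → Vec n),
      IsMaxSolution₀ Δ f₀ x₀ tmax x → ‖x₀‖ ≤ s →
      ∀ t : ℝ, Tk - (Δ : ℝ) ≤ t → V (x t) < aSeq ρ (α₂ s) k := by
  have hB0 : 0 ≤ α₂ s := hα₂.1.nonneg hs0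
  -- basic facts about solutions in the ball
  have hVle : ∀ (x₀ : Hist Δ n) (tmax : EReal) (x : ℝ → Vec n),
      IsMaxSolution₀ Δ f₀ x₀ tmax x → ‖x₀‖ ≤ s →
      ∀ t : ℝ, -(Δ : ℝ) ≤ t → V (x t) ≤ α₂ s := by
    intro x₀ tmax x hmax hx₀ t ht
    have htop := maxsol_tmax_top hf hf0 hV hVnonneg hα₁ hα₂ hsand hα hρK hRaz hρ hmax
    have hcoe : ∀ u : ℝ, (u : EReal) < tmax := fun u => by
      rw [htop]; exact EReal.coe_lt_top u
    have hx₀s : α₂ ‖x₀‖ ≤ α₂ s := hα₂.1.monoOn (norm_nonneg _) hs0 hx₀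
    rcases le_or_gt t 0 with h | h
    · exact le_trans (sol_init_V_bound hmax.1 hα₂ hsand ⟨ht, h⟩) hx₀s
    · exact le_trans (stab hf hmax.1 hV hVnonneg hα₂ hsand hα hρK hRaz hρ t h.le (hcoe t)) hx₀s
  induction k with
  | zero =>
    refine ⟨0, le_rfl, fun x₀ tmax x hmax hx₀ t ht => ?_⟩
    have := hVle x₀ tmax x hmax hx₀ t (by simpa using ht)
    show V (x t) < α₂ s + 1
    linarith
  | succ k ih =>
    obtain ⟨Tk, hTk0, hTk⟩ := ih
    set a := aSeq ρ (α₂ s) k with ha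
    set b := aSeq ρ (α₂ s) (k+1) with hb
    have hstep := aSeq_step hρK hρ hB0 k
    have hapos := aSeq_pos hρK hB0 k
    have hbpos := aSeq_pos hρK hB0 (k+1)
    have ha0 : a ≤ aSeq ρ (α₂ s) 0 := aSeq_anti hρK hρ hB0 0 k (Nat.zero_le k)
    -- uniform radius bound
    obtain ⟨R, hR⟩ := ((hα₁.2.eventually_ge_atTop (aSeq ρ (α₂ s) 0)).and
      (eventually_ge_atTop 0)).exists
    have hzR : ∀ z : Vec n, V z < aSeq ρ (α₂ s) 0 → ‖z‖ ≤ R := by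
      intro z hz
      by_contra hcon
      push_neg at hcon
      have := hα₁.1.2.1 hR.2 (le_trans hR.2 hcon.le) hcon
      linarith [(hsand z).1, hR.1]
    -- small-norm bound
    obtain ⟨m, hm0, hm⟩ : ∃ m : ℝ, 0 < m ∧ α₂ m < b := by
      have hcw : Tendsto α₂ (𝓝[Ici 0] 0) (𝓝 0) := by
        have := (hα₂.1.1 0 (self_mem_Ici)).tendsto
        rwa [hα₂.1.2.2] at this
      have h1 : ∀ᶠ m in 𝓝[>] (0:ℝ), α₂ m < b := by
        refine Eventually.filter_mono (nhdsWithin_mono 0 Ioi_subset_Ici_self) ?_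
        exact hcw.eventually (Filter.Tendsto.eventually_lt_const hbpos tendsto_id)
      obtain ⟨m, hmb, hmm⟩ := (h1.and eventually_mem_nhdsWithin).exists
      exact ⟨m, hmm, hmb⟩
    -- positive decay rate
    obtain ⟨γ, hγ0, hγ⟩ : ∃ γ : ℝ, 0 < γ ∧ ∀ w : ℝ, m ≤ w → w ≤ R → γ ≤ α w := by
      rcases le_or_gt m R with h | h
      · obtain ⟨c₀, hc₀mem, hc₀min⟩ := (isCompact_Icc (a := m) (b := R)).exists_isMinOn
          (nonempty_Icc.2 h) (hα.1.mono fun w hw => le_trans hm0.le hw.1)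
        exact ⟨α c₀, hα.2.2 _ (lt_of_lt_of_le hm0 hc₀mem.1),
          fun w h1 h2 => hc₀min ⟨h1, h2⟩⟩
      · exact ⟨1, one_pos, fun w h1 h2 => absurd (le_trans h1 h2) (not_le.2 h)⟩
    refine ⟨Tk + a / γ + (Δ : ℝ), by positivity, fun x₀ tmax x hmax hx₀ t ht => ?_⟩
    have htop := maxsol_tmax_top hf hf0 hV hVnonneg hα₁ hα₂ hsand hα hρK hRaz hρ hmax
    have hcoe : ∀ u : ℝ, (u : EReal) < tmax := fun u => by
      rw [htop]; exact EReal.coe_lt_top u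
    have hk := hTk x₀ tmax x hmax hx₀
    have hγle : ∀ u : ℝ, Tk ≤ u → b ≤ V (x u) → γ ≤ α ‖x u‖ := by
      intro u hu hbV
      have h1 : V (x u) < aSeq ρ (α₂ s) 0 :=
        lt_of_lt_of_le (hk u (by linarith [Δ.coe_nonneg])) ha0
      have h2 : ‖x u‖ ≤ R := hzR _ h1
      have h3 : m ≤ ‖x u‖ := by
        by_contra hcon
        push_neg at hcon
        have := hα₂.1.monoOn (norm_nonneg _) hm0.le hcon.le
        linarith [(hsand (x u)).2, hm]
      exact hγ _ h3 h2
    obtain ⟨t₂, ht₂mem, ht₂⟩ := dwell hf hmax.1 hV hVnonneg hα hρK hRaz htop hTk0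
      hbpos hstep.2.le hstep.1
      (fun u hu => (hk u hu).le) hγ0 hγle
    have hnoup := noup hf hmax.1 hV hVnonneg hα₂ hsand hα hρK hRaz
      (le_trans hTk0 ht₂mem.1) (hcoe t₂) hstep.2.le hbpos hstep.1
      (fun u hu => (hk u (by linarith [hu.1, ht₂mem.1])).le) ht₂
    exact hnoup t (by linarith [ht₂mem.2]) (hcoe t)

end

noncomputable section

section Avg

variable {b : ℝ → ℝ}

/-- moving average of an antitone function over a unit window -/
def hAvg (b : ℝ → ℝ) (t : ℝ) : ℝ := ∫ τ in (t-1)..t, b τ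

theorem hAvg_eq (hb : Antitone b) (t : ℝ) :
    hAvg b t = (∫ τ in (0:ℝ)..t, b τ) - ∫ τ in (0:ℝ)..(t-1), b τ := by
  have h1 : IntervalIntegrable b volume 0 (t-1) := (hb.antitoneOn _).intervalIntegrable
  have h2 : IntervalIntegrable b volume (t-1) t := (hb.antitoneOn _).intervalIntegrable
  rw [hAvg, ← intervalIntegral.integral_add_adjacent_intervals h1 h2]
  abel

theorem hAvg_continuous (hb : Antitone b) : Continuous (hAvg b) := by
  have hF : Continuous fun u => ∫ τ in (0:ℝ)..u, b τ :=
    intervalIntegral.continuous_primitive (fun a c => (hb.antitoneOn _).intervalIntegrable) 0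
  have : hAvg b = fun t => (∫ τ in (0:ℝ)..t, b τ) - ∫ τ in (0:ℝ)..(t-1), b τ :=
    funext (hAvg_eq hb)
  rw [this]
  exact hF.sub (hF.comp (continuous_id.sub continuous_const))

theorem hAvg_ge (hb : Antitone b) (t : ℝ) : b t ≤ hAvg b t := by
  have h2 : IntervalIntegrable b volume (t-1) t := (hb.antitoneOn _).intervalIntegrable
  have h3 := intervalIntegral.integral_mono_on (by linarith : t - 1 ≤ t)
    (intervalIntegrable_const (c := b t)) h2 (fun u hu => hb hu.2)
  rw [intervalIntegral.integral_const] at h3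
  simpa [hAvg] using h3

theorem hAvg_le (hb : Antitone b) (t : ℝ) : hAvg b t ≤ b (t-1) := by
  have h2 : IntervalIntegrable b volume (t-1) t := (hb.antitoneOn _).intervalIntegrable
  have h3 := intervalIntegral.integral_mono_on (by linarith : t - 1 ≤ t)
    h2 (intervalIntegrable_const (c := b (t-1))) (fun u hu => hb hu.1)
  rw [intervalIntegral.integral_const] at h3
  simpa [hAvg] using h3

theorem hAvg_anti (hb : Antitone b) : Antitone (hAvg b) := by
  intro t t' htt'
  have key : ∀ u u' : ℝ, u ≤ u' →
      (∫ τ in u..u', b τ) ≤ ∫ τ in (u-1)..(u'-1), b τ := by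
    intro u u' h
    have h1 : (∫ τ in u..u', b τ) = ∫ τ in (u-1)..(u'-1), b (τ + 1) := by
      rw [intervalIntegral.integral_comp_add_right b 1]
      norm_num
    rw [h1]
    refine intervalIntegral.integral_mono_on (by linarith)
      (((hb.comp_monotone (monotone_id.add_const 1)).antitoneOn _).intervalIntegrable)
      ((hb.antitoneOn _).intervalIntegrable) fun τ _ => hb (by linarith)
  have h1 : IntervalIntegrable b volume (t-1) t := (hb.antitoneOn _).intervalIntegrable
  have h2 : IntervalIntegrable b volume t t' := (hb.antitoneOn _).intervalIntegrable
  have h3 : IntervalIntegrable b volume (t-1) (t'-1) := (hb.antitoneOn _).intervalIntegrable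
  have h4 : IntervalIntegrable b volume (t'-1) t' := (hb.antitoneOn _).intervalIntegrable
  have e1 : hAvg b t + (∫ τ in t..t', b τ) = (∫ τ in (t-1)..(t'-1), b τ) + hAvg b t' := by
    rw [hAvg, hAvg]
    rw [intervalIntegral.integral_add_adjacent_intervals h1 h2,
      intervalIntegral.integral_add_adjacent_intervals h3 h4]
  have := key t t' htt'
  linarith

theorem hAvg_nonneg (hb : Antitone b) (hb0 : ∀ u, 0 ≤ b u) (t : ℝ) : 0 ≤ hAvg b t :=
  le_trans (hb0 t) (hAvg_ge hb t)

theorem hAvg_lip (hb : Antitone b) (hb0 : ∀ u, 0 ≤ b u) {t t' : ℝ} (h : t' ≤ t) :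
    hAvg b t' - hAvg b t ≤ b (t' - 1) * (t - t') := by
  have h1 : IntervalIntegrable b volume (t'-1) t' := (hb.antitoneOn _).intervalIntegrable
  have h2 : IntervalIntegrable b volume t' t := (hb.antitoneOn _).intervalIntegrable
  have h3 : IntervalIntegrable b volume (t'-1) (t-1) := (hb.antitoneOn _).intervalIntegrable
  have h4 : IntervalIntegrable b volume (t-1) t := (hb.antitoneOn _).intervalIntegrable
  have e1 : hAvg b t' + (∫ τ in t'..t, b τ) = (∫ τ in (t'-1)..(t-1), b τ) + hAvg b t := by
    rw [hAvg, hAvg]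
    rw [intervalIntegral.integral_add_adjacent_intervals h1 h2,
      intervalIntegral.integral_add_adjacent_intervals h3 h4]
  have e2 : (∫ τ in (t'-1)..(t-1), b τ) ≤ b (t'-1) * (t - t') := by
    have h5 := intervalIntegral.integral_mono_on (by linarith : t' - 1 ≤ t - 1)
      h3 (intervalIntegrable_const (c := b (t'-1))) (fun u hu => hb hu.1)
    rw [intervalIntegral.integral_const] at h5
    calc (∫ τ in (t'-1)..(t-1), b τ) ≤ ((t-1) - (t'-1)) • b (t'-1) := h5
    _ = b (t'-1) * (t - t') := by rw [smul_eq_mul]; ring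
  have e3 : 0 ≤ ∫ τ in t'..t, b τ := by
    rw [intervalIntegral.integral_of_le h]
    exact setIntegral_nonneg measurableSet_Ioc fun u _ => hb0 u
  linarith

theorem hAvg_mono_fn {b' : ℝ → ℝ} (hb : Antitone b) (hb' : Antitone b')
    (hle : ∀ u, b u ≤ b' u) (t : ℝ) : hAvg b t ≤ hAvg b' t := by
  exact intervalIntegral.integral_mono_on (by linarith : t - 1 ≤ t)
    ((hb.antitoneOn _).intervalIntegrable) ((hb'.antitoneOn _).intervalIntegrable)
    fun u _ => hle u

end Avg

end

noncomputable section

variable {Δ : ℝ≥0} {n : ℕ}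

/-- set of Lyapunov values along tails of maximal solutions from a ball -/
def EnvSet (Δ : ℝ≥0) {n : ℕ} (f₀ : Hist Δ n → Vec n) (V : Vec n → ℝ) (s t : ℝ) : Set ℝ :=
  {r | ∃ (x₀ : Hist Δ n) (tmax : EReal) (x : ℝ → Vec n) (τ : ℝ),
    IsMaxSolution₀ Δ f₀ x₀ tmax x ∧ ‖x₀‖ ≤ max s 0 ∧ max t 0 ≤ τ ∧ r = V (x τ)}

/-- the decay envelope -/
def bfun (Δ : ℝ≥0) {n : ℕ} (f₀ : Hist Δ n → Vec n) (V : Vec n → ℝ) (s t : ℝ) : ℝ :=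
  sSup (EnvSet Δ f₀ V s t)

variable {f₀ : Hist Δ n → Vec n} {V : Vec n → ℝ} {α₁ α₂ α ρ : ℝ → ℝ}

/-- Hypothesis bundle for the Razumikhin theorem. -/
structure RazHyp (Δ : ℝ≥0) {n : ℕ} (f₀ : Hist Δ n → Vec n) (V : Vec n → ℝ)
    (α₁ α₂ α ρ : ℝ → ℝ) : Prop where
  hf : LipOnBounded₀ f₀
  hf0 : f₀ 0 = 0
  hV : ContDiff ℝ 1 V
  hVnonneg : ∀ z : Vec n, 0 ≤ V z
  hα₁ : ClassKinf α₁
  hα₂ : ClassKinf α₂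
  hsand : ∀ z : Vec n, α₁ ‖z‖ ≤ V z ∧ V z ≤ α₂ ‖z‖
  hα : ClassP α
  hρK : ClassKinf ρ
  hRaz : ∀ φ : Hist Δ n,
    ρ (⨆ τ : Icc (-(Δ : ℝ)) (0 : ℝ), V (φ τ)) ≤ V (ev0 φ) →
      fderiv ℝ V (ev0 φ) (f₀ φ) ≤ -α ‖ev0 φ‖
  hρ : ∀ s : ℝ, 0 < s → ρ s < s

namespace RazHyp

variable (hyp : RazHyp Δ f₀ V α₁ α₂ α ρ)
include hyp

theorem V_zero : V 0 = 0 := by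
  have h := (hyp.hsand 0).2
  rw [norm_zero, hyp.hα₂.1.2.2] at h
  exact le_antisymm h (hyp.hVnonneg 0)

theorem maxsol_V_le {x₀ : Hist Δ n} {tmax : EReal} {x : ℝ → Vec n}
    (hmax : IsMaxSolution₀ Δ f₀ x₀ tmax x) {s : ℝ} (hs0 : 0 ≤ s) (hx₀ : ‖x₀‖ ≤ s) :
    ∀ t : ℝ, -(Δ : ℝ) ≤ t → V (x t) ≤ α₂ s := by
  intro t ht
  have htop := maxsol_tmax_top hyp.hf hyp.hf0 hyp.hV hyp.hVnonneg hyp.hα₁ hyp.hα₂ hyp.hsand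
    hyp.hα hyp.hρK hyp.hRaz hyp.hρ hmax
  have hx₀s : α₂ ‖x₀‖ ≤ α₂ s := hyp.hα₂.1.monoOn (norm_nonneg _) hs0 hx₀
  rcases le_or_gt t 0 with h | h
  · exact le_trans (sol_init_V_bound hmax.1 hyp.hα₂ hyp.hsand ⟨ht, h⟩) hx₀s
  · refine le_trans (stab hyp.hf hmax.1 hyp.hV hyp.hVnonneg hyp.hα₂ hyp.hsand hyp.hα hyp.hρK
      hyp.hRaz hyp.hρ t h.le ?_) hx₀s
    rw [htop]
    exact EReal.coe_lt_top t

theorem env_mem_zero (s t : ℝ) : (0:ℝ) ∈ EnvSet Δ f₀ V s t :=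
  ⟨0, ⊤, fun _ => 0, max t 0, zero_is_maxsol hyp.hf0,
    by rw [norm_zero]; exact le_max_right _ _, le_rfl, hyp.V_zero.symm⟩

theorem env_bdd (s t : ℝ) : ∀ r ∈ EnvSet Δ f₀ V s t, r ≤ α₂ (max s 0) := by
  rintro r ⟨x₀, tmax, x, τ, hmax, hx₀, hτ, rfl⟩
  refine hyp.maxsol_V_le hmax (le_max_right _ _) hx₀ τ ?_
  have : (0:ℝ) ≤ τ := le_trans (le_max_right _ _) hτ
  linarith [Δ.coe_nonneg]

theorem bfun_nonneg (s t : ℝ) : 0 ≤ bfun Δ f₀ V s t :=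
  le_csSup ⟨α₂ (max s 0), hyp.env_bdd s t⟩ (hyp.env_mem_zero s t)

theorem bfun_le (s t : ℝ) : bfun Δ f₀ V s t ≤ α₂ (max s 0) :=
  csSup_le ⟨0, hyp.env_mem_zero s t⟩ (hyp.env_bdd s t)

theorem bfun_mono (t : ℝ) : Monotone fun s => bfun Δ f₀ V s t := by
  intro s s' hss'
  refine csSup_le_csSup ⟨α₂ (max s' 0), hyp.env_bdd s' t⟩ ⟨0, hyp.env_mem_zero s t⟩ ?_
  rintro r ⟨x₀, tmax, x, τ, hmax, hx₀, hτ, rfl⟩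
  exact ⟨x₀, tmax, x, τ, hmax, le_trans hx₀ (max_le_max hss' le_rfl), hτ, rfl⟩

theorem bfun_anti (s : ℝ) : Antitone fun t => bfun Δ f₀ V s t := by
  intro t t' htt'
  refine csSup_le_csSup ⟨α₂ (max s 0), hyp.env_bdd s t⟩ ⟨0, hyp.env_mem_zero s t'⟩ ?_
  rintro r ⟨x₀, tmax, x, τ, hmax, hx₀, hτ, rfl⟩
  exact ⟨x₀, tmax, x, τ, hmax, hx₀, le_trans (max_le_max htt' le_rfl) hτ, rfl⟩

theorem bfun_ge {x₀ : Hist Δ n} {tmax : EReal} {x : ℝ → Vec n}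
    (hmax : IsMaxSolution₀ Δ f₀ x₀ tmax x) {t : ℝ} (ht0 : 0 ≤ t) :
    V (x t) ≤ bfun Δ f₀ V ‖x₀‖ t :=
  le_csSup ⟨α₂ (max ‖x₀‖ 0), hyp.env_bdd _ t⟩
    ⟨x₀, tmax, x, t, hmax, le_max_left _ _, max_le le_rfl ht0, rfl⟩

theorem bfun_tendsto (s : ℝ) : Tendsto (fun t => bfun Δ f₀ V s t) atTop (𝓝 0) := by
  rw [Metric.tendsto_atTop]
  intro ε hε
  have hs0 : (0:ℝ) ≤ max s 0 := le_max_right _ _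
  have htnd := aSeq_tendsto hyp.hρK hyp.hρ (hyp.hα₂.1.nonneg hs0)
  obtain ⟨k, hk⟩ := (htnd.eventually (Filter.Tendsto.eventually_lt_const hε tendsto_id)).exists
  obtain ⟨Tk, hTk0, hTk⟩ := stage_claim hyp.hf hyp.hf0 hyp.hV hyp.hVnonneg hyp.hα₁ hyp.hα₂
    hyp.hsand hyp.hα hyp.hρK hyp.hRaz hyp.hρ hs0 k
  refine ⟨Tk, fun t ht => ?_⟩
  have hub : bfun Δ f₀ V s t ≤ aSeq ρ (α₂ (max s 0)) k := by
    refine csSup_le ⟨0, hyp.env_mem_zero s t⟩ ?_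
    rintro r ⟨x₀, tmax, x, τ, hmax, hx₀, hτ, rfl⟩
    refine (hTk x₀ tmax x hmax hx₀ τ ?_).le
    have h1 : t ≤ τ := le_trans (le_max_left _ _) hτ
    linarith [Δ.coe_nonneg]
  rw [Real.dist_eq, abs_of_nonneg (by linarith [hyp.bfun_nonneg s t] : (0:ℝ) ≤ bfun Δ f₀ V s t - 0)]
  have := hyp.bfun_nonneg s t
  simp only [sub_zero]
  exact lt_of_le_of_lt hub hk

end RazHyp

end

noncomputable section

variable {Δ : ℝ≥0} {n : ℕ}

/-- averaged envelope in time -/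
def Hfun (Δ : ℝ≥0) {n : ℕ} (f₀ : Hist Δ n → Vec n) (V : Vec n → ℝ) (s t : ℝ) : ℝ :=
  hAvg (fun τ => bfun Δ f₀ V s τ) t

/-- averaged envelope in both variables -/
def gfun (Δ : ℝ≥0) {n : ℕ} (f₀ : Hist Δ n → Vec n) (V : Vec n → ℝ) (s t : ℝ) : ℝ :=
  ∫ σ in s..(s+1), Hfun Δ f₀ V σ t

variable {f₀ : Hist Δ n → Vec n} {V : Vec n → ℝ} {α₁ α₂ α ρ : ℝ → ℝ}

namespace RazHyp

variable (hyp : RazHyp Δ f₀ V α₁ α₂ α ρ)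
include hyp

theorem Hanti (s : ℝ) : Antitone (Hfun Δ f₀ V s) := hAvg_anti (hyp.bfun_anti s)

theorem Hcont (s : ℝ) : Continuous (Hfun Δ f₀ V s) := hAvg_continuous (hyp.bfun_anti s)

theorem Hge (s t : ℝ) : bfun Δ f₀ V s t ≤ Hfun Δ f₀ V s t := hAvg_ge (hyp.bfun_anti s) t

theorem Hle (s t : ℝ) : Hfun Δ f₀ V s t ≤ bfun Δ f₀ V s (t-1) := hAvg_le (hyp.bfun_anti s) t

theorem Hnonneg (s t : ℝ) : 0 ≤ Hfun Δ f₀ V s t :=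
  le_trans (hyp.bfun_nonneg s t) (hyp.Hge s t)

theorem Hmono (t : ℝ) : Monotone fun s => Hfun Δ f₀ V s t := by
  intro s s' hss'
  exact hAvg_mono_fn (hyp.bfun_anti s) (hyp.bfun_anti s')
    (fun u => hyp.bfun_mono u hss') t

theorem Htendsto (s : ℝ) : Tendsto (Hfun Δ f₀ V s) atTop (𝓝 0) := by
  refine squeeze_zero (fun t => hyp.Hnonneg s t) (fun t => hyp.Hle s t) ?_
  exact (hyp.bfun_tendsto s).comp (tendsto_atTop_add_const_right atTop (-1) tendsto_id)

theorem gInt (t : ℝ) (a c : ℝ) : IntervalIntegrable (fun σ => Hfun Δ f₀ V σ t) volume a c :=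
  ((hyp.Hmono t).monotoneOn _).intervalIntegrable

theorem g_ge (s t : ℝ) : Hfun Δ f₀ V s t ≤ gfun Δ f₀ V s t := by
  have h := intervalIntegral.integral_mono_on (by linarith : s ≤ s + 1)
    (intervalIntegrable_const (c := Hfun Δ f₀ V s t)) (hyp.gInt t s (s+1))
    (fun σ hσ => hyp.Hmono t hσ.1)
  rw [intervalIntegral.integral_const] at h
  simpa [gfun] using h

theorem g_le (s t : ℝ) : gfun Δ f₀ V s t ≤ Hfun Δ f₀ V (s+1) t := by
  have h := intervalIntegral.integral_mono_on (by linarith : s ≤ s + 1)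
    (hyp.gInt t s (s+1)) (intervalIntegrable_const (c := Hfun Δ f₀ V (s+1) t))
    (fun σ hσ => hyp.Hmono t hσ.2)
  rw [intervalIntegral.integral_const] at h
  simpa [gfun] using h

theorem g_nonneg (s t : ℝ) : 0 ≤ gfun Δ f₀ V s t :=
  le_trans (hyp.Hnonneg s t) (hyp.g_ge s t)

theorem g_mono (t : ℝ) : Monotone fun s => gfun Δ f₀ V s t := by
  intro s s' hss'
  have h1 : gfun Δ f₀ V s t ≤ ∫ σ in s..(s+1), Hfun Δ f₀ V (σ + (s' - s)) t := by
    refine intervalIntegral.integral_mono_on (by linarith : s ≤ s + 1)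
      (hyp.gInt t s (s+1))
      ((((hyp.Hmono t).comp (monotone_id.add_const (s' - s))).monotoneOn _).intervalIntegrable)
      fun σ _ => hyp.Hmono t (by linarith)
  have h2 : (∫ σ in s..(s+1), Hfun Δ f₀ V (σ + (s' - s)) t)
      = ∫ σ in s'..(s'+1), Hfun Δ f₀ V σ t := by
    rw [intervalIntegral.integral_comp_add_right (fun σ => Hfun Δ f₀ V σ t) (s' - s)]
    ring_nf
  rw [h2] at h1
  exact h1

theorem g_anti (s : ℝ) : Antitone fun t => gfun Δ f₀ V s t := by
  intro t t' htt'
  exact intervalIntegral.integral_mono_on (by linarith : s ≤ s + 1)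
    (hyp.gInt t' s (s+1)) (hyp.gInt t s (s+1)) fun σ _ => hyp.Hanti σ htt'

theorem g_cont_s (t : ℝ) : Continuous fun s => gfun Δ f₀ V s t := by
  have hF : Continuous fun u => ∫ σ in (0:ℝ)..u, Hfun Δ f₀ V σ t :=
    intervalIntegral.continuous_primitive (fun a c => hyp.gInt t a c) 0
  have : (fun s => gfun Δ f₀ V s t) = fun s =>
      (∫ σ in (0:ℝ)..(s+1), Hfun Δ f₀ V σ t) - ∫ σ in (0:ℝ)..s, Hfun Δ f₀ V σ t := by
    funext s
    have h1 := intervalIntegral.integral_add_adjacent_intervals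
      (hyp.gInt t 0 s) (hyp.gInt t s (s+1))
    show (∫ σ in s..(s+1), Hfun Δ f₀ V σ t) = _
    linarith
  rw [this]
  exact (hF.comp (continuous_id.add continuous_const)).sub hF

theorem g_tendsto (s : ℝ) : Tendsto (fun t => gfun Δ f₀ V s t) atTop (𝓝 0) :=
  squeeze_zero (fun t => hyp.g_nonneg s t) (fun t => hyp.g_le s t) (hyp.Htendsto (s+1))

theorem g_cont_t (s : ℝ) : Continuous fun t => gfun Δ f₀ V s t := by
  rw [continuous_iff_continuousAt]
  intro t₀
  set C := bfun Δ f₀ V (s+1) (t₀ - 2) with hC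
  have hC0 : 0 ≤ C := hyp.bfun_nonneg _ _
  have key : ∀ t t' : ℝ, t₀ - 1 ≤ t' → t' ≤ t →
      gfun Δ f₀ V s t' - gfun Δ f₀ V s t ≤ C * (t - t') := by
    intro t t' h1 h2
    have hpt : ∀ σ : ℝ, σ ∈ Icc s (s+1) →
        Hfun Δ f₀ V σ t' - Hfun Δ f₀ V σ t ≤ C * (t - t') := by
      intro σ hσ
      have hl := hAvg_lip (hyp.bfun_anti σ) (fun u => hyp.bfun_nonneg σ u) h2
      refine le_trans hl ?_
      have hb1 : bfun Δ f₀ V σ (t' - 1) ≤ bfun Δ f₀ V (s+1) (t' - 1) :=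
        hyp.bfun_mono (t' - 1) hσ.2
      have hb2 : bfun Δ f₀ V (s+1) (t' - 1) ≤ C := hyp.bfun_anti (s+1) (by linarith)
      exact mul_le_mul_of_nonneg_right (le_trans hb1 hb2) (by linarith)
    have hsub : gfun Δ f₀ V s t' - gfun Δ f₀ V s t
        = ∫ σ in s..(s+1), (Hfun Δ f₀ V σ t' - Hfun Δ f₀ V σ t) := by
      rw [intervalIntegral.integral_sub (hyp.gInt t' s (s+1)) (hyp.gInt t s (s+1))]
      rfl
    rw [hsub]
    have h3 := intervalIntegral.integral_mono_on (by linarith : s ≤ s + 1)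
      ((hyp.gInt t' s (s+1)).sub (hyp.gInt t s (s+1)))
      (intervalIntegrable_const (c := C * (t - t'))) hpt
    rw [intervalIntegral.integral_const] at h3
    simpa using h3
  rw [Metric.continuousAt_iff]
  intro ε hε
  refine ⟨min 1 (ε / (C + 1)), lt_min one_pos (by positivity), fun {t} hd => ?_⟩
  rw [Real.dist_eq] at hd
  rw [lt_min_iff] at hd
  rw [Real.dist_eq]
  rcases le_or_gt t t₀ with h | h
  · have h1 : t₀ - 1 ≤ t := by
      rcases abs_lt.1 hd.1 with ⟨ha, _⟩
      linarith
    have h2 := key t₀ t h1 h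
    have h3 : 0 ≤ gfun Δ f₀ V s t - gfun Δ f₀ V s t₀ := by
      linarith [hyp.g_anti s h]
    rw [abs_of_nonneg h3]
    have h4 : t₀ - t < ε / (C + 1) := by
      rcases abs_lt.1 hd.2 with ⟨ha, _⟩
      linarith
    calc gfun Δ f₀ V s t - gfun Δ f₀ V s t₀ ≤ C * (t₀ - t) := h2
    _ ≤ C * (ε / (C+1)) := mul_le_mul_of_nonneg_left h4.le hC0
    _ < ε := by rw [mul_div_assoc', div_lt_iff₀ (by positivity : (0:ℝ) < C + 1)]; nlinarith
  · have h1 : t₀ - 1 ≤ t₀ := by linarith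
    have h2 := key t t₀ h1 h.le
    have h3 : gfun Δ f₀ V s t - gfun Δ f₀ V s t₀ ≤ 0 := by
      linarith [hyp.g_anti s h.le]
    rw [abs_of_nonpos h3]
    have h4 : t - t₀ < ε / (C + 1) := by
      rcases abs_lt.1 hd.2 with ⟨_, ha⟩
      linarith
    calc -(gfun Δ f₀ V s t - gfun Δ f₀ V s t₀) = gfun Δ f₀ V s t₀ - gfun Δ f₀ V s t := by ring
    _ ≤ C * (t - t₀) := h2
    _ ≤ C * (ε / (C+1)) := mul_le_mul_of_nonneg_left h4.le hC0
    _ < ε := by rw [mul_div_assoc', div_lt_iff₀ (by positivity : (0:ℝ) < C + 1)]; nlinarith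

end RazHyp

end

noncomputable section

variable {Δ : ℝ≥0} {n : ℕ} {f₀ : Hist Δ n → Vec n} {V : Vec n → ℝ} {α₁ α₂ α ρ : ℝ → ℝ}

namespace RazHyp

/-- the KL bound function -/
def betaKL (hyp : RazHyp Δ f₀ V α₁ α₂ α ρ) : ℝ → ℝ → ℝ :=
  fun s t => kInv hyp.hα₁ (Real.sqrt ((α₂ s + s) * (gfun Δ f₀ V s t + s * Real.exp (-t))))

variable (hyp : RazHyp Δ f₀ V α₁ α₂ α ρ)
include hyp

theorem P_nonneg {s : ℝ} (hs : 0 ≤ s) (t : ℝ) :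
    0 ≤ gfun Δ f₀ V s t + s * Real.exp (-t) := by
  have := hyp.g_nonneg s t
  have := Real.exp_pos (-t)
  nlinarith

theorem Q_nonneg {s : ℝ} (hs : 0 ≤ s) : 0 ≤ α₂ s + s := by
  have := hyp.hα₂.1.nonneg hs
  linarith

theorem betaKL_classKL : ClassKL hyp.betaKL := by
  constructor
  · -- class K in s, for each t ≥ 0
    intro t _
    refine ⟨?_, ?_, ?_⟩
    · -- continuity in s
      have hc : ContinuousOn (fun s => (α₂ s + s) * (gfun Δ f₀ V s t + s * Real.exp (-t)))
          (Ici 0) := by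
        refine ContinuousOn.mul (hyp.hα₂.1.1.add continuousOn_id) ?_
        exact ((hyp.g_cont_s t).continuousOn).add
          (continuous_id.mul continuous_const).continuousOn
      exact (kInv_continuous hyp.hα₁).comp_continuousOn
        (Real.continuous_sqrt.comp_continuousOn hc)
    · -- strict monotonicity in s
      intro s₁ h₁ s₂ h₂ h
      have h₁' : (0:ℝ) ≤ s₁ := h₁
      have h₂' : (0:ℝ) ≤ s₂ := h₂
      apply kInv_strictMono hyp.hα₁
      apply Real.sqrt_lt_sqrt (mul_nonneg (hyp.Q_nonneg h₁') (hyp.P_nonneg h₁' t))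
      have hQ : α₂ s₁ + s₁ < α₂ s₂ + s₂ := by
        have := hyp.hα₂.1.monoOn h₁' h₂' h.le
        linarith
      have hP : gfun Δ f₀ V s₁ t + s₁ * Real.exp (-t)
          ≤ gfun Δ f₀ V s₂ t + s₂ * Real.exp (-t) := by
        have h1 := hyp.g_mono t h.le
        have h2 : s₁ * Real.exp (-t) ≤ s₂ * Real.exp (-t) :=
          mul_le_mul_of_nonneg_right h.le (Real.exp_pos _).le
        exact add_le_add h1 h2
      rcases eq_or_lt_of_le h₁' with h0 | h0
      · -- s₁ = 0
        rw [← h0, hyp.hα₂.1.2.2]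
        have hQ2 : 0 < α₂ s₂ + s₂ := by
          have := hyp.hα₂.1.nonneg h₂'
          rw [← h0] at h
          linarith
        have hP2 : 0 < gfun Δ f₀ V s₂ t + s₂ * Real.exp (-t) := by
          have := hyp.g_nonneg s₂ t
          have he := Real.exp_pos (-t)
          rw [← h0] at h
          nlinarith
        simpa using mul_pos hQ2 hP2
      · have hQ1 : 0 < α₂ s₁ + s₁ := by
          have := hyp.hα₂.1.nonneg h₁'
          linarith
        have hP2 : 0 < gfun Δ f₀ V s₂ t + s₂ * Real.exp (-t) := by
          have := hyp.g_nonneg s₂ t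
          have he := Real.exp_pos (-t)
          have : 0 < s₂ := lt_trans h0 h
          nlinarith [hyp.g_nonneg s₂ t]
        calc (α₂ s₁ + s₁) * (gfun Δ f₀ V s₁ t + s₁ * Real.exp (-t))
            ≤ (α₂ s₁ + s₁) * (gfun Δ f₀ V s₂ t + s₂ * Real.exp (-t)) :=
          mul_le_mul_of_nonneg_left hP hQ1.le
        _ < (α₂ s₂ + s₂) * (gfun Δ f₀ V s₂ t + s₂ * Real.exp (-t)) :=
          mul_lt_mul_of_pos_right hQ hP2
    · -- zero at zero
      show kInv hyp.hα₁ (Real.sqrt ((α₂ 0 + 0) * _)) = 0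
      rw [hyp.hα₂.1.2.2]
      norm_num
      exact kInv_zero hyp.hα₁
  · -- KL in t for each s ≥ 0
    intro s hs
    have hcP : Continuous fun t => gfun Δ f₀ V s t + s * Real.exp (-t) :=
      (hyp.g_cont_t s).add (continuous_const.mul (Real.continuous_exp.comp continuous_neg))
    refine ⟨?_, ?_, ?_⟩
    · exact ((kInv_continuous hyp.hα₁).comp
        (Real.continuous_sqrt.comp (continuous_const.mul hcP))).continuousOn
    · intro t₁ _ t₂ _ h
      apply (kInv_strictMono hyp.hα₁).monotone
      apply Real.sqrt_le_sqrt
      refine mul_le_mul_of_nonneg_left ?_ (hyp.Q_nonneg hs)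
      refine add_le_add (hyp.g_anti s h) ?_
      exact mul_le_mul_of_nonneg_left (Real.exp_le_exp.2 (by linarith)) hs
    · have hP : Tendsto (fun t => gfun Δ f₀ V s t + s * Real.exp (-t)) atTop (𝓝 0) := by
        have h1 := hyp.g_tendsto s
        have h2 : Tendsto (fun t => s * Real.exp (-t)) atTop (𝓝 (s * 0)) :=
          Real.tendsto_exp_neg_atTop_nhds_zero.const_mul s
        rw [mul_zero] at h2
        simpa using h1.add h2
      have h3 : Tendsto (fun t => (α₂ s + s) * (gfun Δ f₀ V s t + s * Real.exp (-t)))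
          atTop (𝓝 0) := by
        have := hP.const_mul (α₂ s + s)
        simpa using this
      have h4 : Tendsto (fun t => Real.sqrt ((α₂ s + s) *
          (gfun Δ f₀ V s t + s * Real.exp (-t)))) atTop (𝓝 0) := by
        have := (Real.continuous_sqrt.tendsto 0).comp h3
        simpa [Function.comp_def] using this
      have h5 := ((kInv_continuous hyp.hα₁).tendsto 0).comp h4
      rw [kInv_zero hyp.hα₁] at h5
      exact h5

theorem gas : GAS Δ f₀ := by
  refine ⟨hyp.betaKL, hyp.betaKL_classKL, ?_⟩
  intro x₀ tmax x hmax
  have htop := maxsol_tmax_top hyp.hf hyp.hf0 hyp.hV hyp.hVnonneg hyp.hα₁ hyp.hα₂ hyp.hsand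
    hyp.hα hyp.hρK hyp.hRaz hyp.hρ hmax
  refine ⟨htop, fun t ht => ?_⟩
  set s := ‖x₀‖ with hsdef
  have hs0 : (0:ℝ) ≤ s := norm_nonneg _
  have hV1 : V (x t) ≤ α₂ s + s := by
    have := hyp.maxsol_V_le hmax hs0 le_rfl t (by linarith [Δ.coe_nonneg])
    linarith
  have hV2 : V (x t) ≤ gfun Δ f₀ V s t + s * Real.exp (-t) := by
    have h1 := hyp.bfun_ge hmax ht
    have h2 := hyp.Hge s t
    have h3 := hyp.g_ge s t
    have h4 : 0 ≤ s * Real.exp (-t) := mul_nonneg hs0 (Real.exp_pos _).le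
    linarith
  have hV0 : 0 ≤ V (x t) := hyp.hVnonneg _
  have hsq : V (x t) ≤ Real.sqrt ((α₂ s + s) * (gfun Δ f₀ V s t + s * Real.exp (-t))) := by
    rw [Real.le_sqrt hV0 (mul_nonneg (hyp.Q_nonneg hs0) (hyp.P_nonneg hs0 t))]
    have := mul_le_mul hV1 hV2 hV0 (hyp.Q_nonneg hs0)
    nlinarith
  have hchain : α₁ ‖x t‖ ≤ Real.sqrt ((α₂ s + s) * (gfun Δ f₀ V s t + s * Real.exp (-t))) :=
    le_trans (hyp.hsand (x t)).1 hsq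
  have := (kInv_strictMono hyp.hα₁).monotone hchain
  rwa [kInv_apply_self hyp.hα₁ (norm_nonneg (x t))] at this

end RazHyp

end

/-- GAS through the Lyapunov–Razumikhin approach. -/
theorem gas_razumikhin
    (Δ : ℝ≥0) (n : ℕ) (f₀ : Hist Δ n → Vec n)
    (hf : LipOnBounded₀ f₀) (hf0 : f₀ 0 = 0)
    (V : Vec n → ℝ) (hV : ContDiff ℝ 1 V) (hVnonneg : ∀ z : Vec n, 0 ≤ V z)
    (α₁ α₂ : ℝ → ℝ) (hα₁ : ClassKinf α₁) (hα₂ : ClassKinf α₂)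
    (hsand : ∀ z : Vec n, α₁ ‖z‖ ≤ V z ∧ V z ≤ α₂ ‖z‖)
    (α : ℝ → ℝ) (hα : ClassP α) (ρ : ℝ → ℝ) (hρK : ClassKinf ρ)
    (hRaz : ∀ φ : Hist Δ n,
      ρ (⨆ τ : Icc (-(Δ : ℝ)) (0 : ℝ), V (φ τ)) ≤ V (ev0 φ) →
        fderiv ℝ V (ev0 φ) (f₀ φ) ≤ -α ‖ev0 φ‖)
    (hρ : ∀ s : ℝ, 0 < s → ρ s < s) :
    GAS Δ f₀ := by
  exact RazHyp.gas ⟨hf, hf0, hV, hVnonneg, hα₁, hα₂, hsand, hα, hρK, hRaz, hρ⟩
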